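/- arXiv:2207.07775 — 5 statements merged into one kernel-verified Lean document; each statement's English description precedes it below -/
import Mathlib

section
/- Let H be a connected graph with t vertices and chromatic number k ≥ 2. Then for every n ≥ t, m(H,n) ≤ (k−1)^{1−t}·(n)_t. Indeed, the Turán coloring of E(K_n) with k−1 parts has exactly (k−1−s)·(⌊n/(k−1)⌋)_t + s·(⌈n/(k−1)⌉)_t monochromatic labeled copies of H, where s is the remainder of n upon division by k−1, and this quantity is at most (k−1)^{1−t}·(n)_t. -/
open Filter

/-- Labeled copies of `F` in coloring `χ` with all edges of color `col`, image in `S`. -/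
noncomputable def colorCopiesIn {α : Type*} [Fintype α] (F : SimpleGraph α)
    {n c : ℕ} (χ : Sym2 (Fin n) → Fin c) (col : Fin c) (S : Set (Fin n)) : ℕ :=
  Set.ncard {f : α → Fin n | Function.Injective f ∧ (∀ v, f v ∈ S) ∧
    ∀ v w, F.Adj v w → χ s(f v, f w) = col}

noncomputable def colorCopies {α : Type*} [Fintype α] (F : SimpleGraph α)
    {n c : ℕ} (χ : Sym2 (Fin n) → Fin c) (col : Fin c) : ℕ :=
  colorCopiesIn F χ col Set.univ

/-- Monochromatic labeled copies of `F` in `χ`. -/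
noncomputable def monoCopies {α : Type*} [Fintype α] (F : SimpleGraph α)
    {n c : ℕ} (χ : Sym2 (Fin n) → Fin c) : ℕ :=
  Set.ncard {f : α → Fin n | Function.Injective f ∧
    ∃ col : Fin c, ∀ v w, F.Adj v w → χ s(f v, f w) = col}

/-- Minimum number of monochromatic labeled copies of `F` over all `c`-colorings of `E(K_n)`. -/
noncomputable def minMono {α : Type*} [Fintype α] (F : SimpleGraph α) (n c : ℕ) : ℕ :=
  ⨅ χ : Sym2 (Fin n) → Fin c, monoCopies F χ

/-- Degree of `v` in color `col`. -/
noncomputable def colorDeg {n c : ℕ} (χ : Sym2 (Fin n) → Fin c) (col : Fin c) (v : Fin n) : ℕ :=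
  Set.ncard {w : Fin n | w ≠ v ∧ χ s(v, w) = col}

/-- `H` is `k`-critical. -/
def IsKCritical {α : Type*} (H : SimpleGraph α) (k : ℕ) : Prop :=
  H.chromaticNumber = (k : ℕ∞) ∧
    ∃ e ∈ H.edgeSet, (H.deleteEdges {e}).chromaticNumber = ((k - 1 : ℕ) : ℕ∞)

/-- Every vertex outside `s` is a pendant vertex whose unique neighbor lies in `s`. -/
def PendantOutside {α : Type*} (H : SimpleGraph α) (s : Finset α) : Prop :=
  ∀ v ∉ s, ∃ w ∈ s, H.neighborSet v = {w}

/-- The Turán coloring of `E(K_n)` with `k-1` parts: edges within parts red (`0`),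
edges between parts blue (`1`). -/
def turanColoring (n k : ℕ) : Sym2 (Fin n) → Fin 2 :=
  Sym2.lift ⟨fun i j => if i.val % (k - 1) = j.val % (k - 1) then 0 else 1,
    fun i j => by
      dsimp only
      by_cases h : i.val % (k - 1) = j.val % (k - 1)
      · rw [if_pos h, if_pos h.symm]
      · rw [if_neg h, if_neg fun h' => h h'.symm]⟩

/-!
In the Turán coloring with `q = k - 1` parts a blue copy of `H` would be a proper `q`-coloring
of `H`, and a red copy of the connected graph `H` stays inside one part; so the monochromatic
copies are exactly the injective maps into a single part, `∑ᵣ (|Vᵣ|)ₜ` of them. Every part has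
`a ≤ ⌈n / q⌉` vertices, hence `q (a - 1 - i) ≤ n - 1 - i` for all `i`, which gives
`q ^ (t - 1) (a)ₜ ≤ a (n - 1)ₜ₋₁`; summing over the parts, whose sizes add up to `n`, bounds
`q ^ (t - 1)` times the count by `(n)ₜ`.
-/

open scoped Function

lemma SimpleGraph.Preconnected.apply_eq_of_forall_adj {α β : Type*} {H : SimpleGraph α}
    (hH : H.Preconnected) {g : α → β} (hg : ∀ v w, H.Adj v w → g v = g w) (v w : α) :
    g v = g w := by
  obtain ⟨p⟩ := hH v w
  induction p with
  | nil => rfl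
  | cons h _ ih => exact (hg _ _ h).trans ih

lemma SimpleGraph.colorable_of_forall_adj_ne {α : Type*} {H : SimpleGraph α} {q : ℕ}
    (c : α → ℕ) (hc : ∀ v, c v < q) (hadj : ∀ v w, H.Adj v w → c v ≠ c w) : H.Colorable q :=
  ⟨.mk (fun v => ⟨c v, hc v⟩) fun h hvw => hadj _ _ h (congrArg Fin.val hvw)⟩

lemma ncard_setOf_injective_mapsTo {α β : Type*} [Fintype α] [Finite β] (S : Set β) :
    {f : α → β | Function.Injective f ∧ ∀ v, f v ∈ S}.ncard =
      S.ncard.descFactorial (Fintype.card α) := by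
  classical
  have := Fintype.ofFinite β
  let e : {f : α → β | Function.Injective f ∧ ∀ v, f v ∈ S} ≃ (α ↪ S) :=
    { toFun := fun f => ⟨fun v => ⟨f.1 v, f.2.2 v⟩, fun _ _ h => f.2.1 (congrArg Subtype.val h)⟩
      invFun := fun g => ⟨fun v => g v, fun _ _ h => g.injective (Subtype.ext h), fun v => (g v).2⟩
      left_inv := fun _ => rfl
      right_inv := fun _ => rfl }
  rw [← Nat.card_coe_set_eq, Nat.card_congr e, Nat.card_eq_fintype_card,
    Fintype.card_embedding_eq, ← Nat.card_eq_fintype_card, Nat.card_coe_set_eq]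

lemma Fin.sum_ite_val_lt {M : Type*} [AddCommMonoid M] {q s : ℕ} (hs : s ≤ q) (x y : M) :
    ∑ r : Fin q, (if (r : ℕ) < s then x else y) = s • x + (q - s) • y := by
  classical
  rw [Finset.sum_ite, Finset.sum_const, Finset.sum_const, Fin.card_filter_val_lt,
    Finset.filter_not, Finset.card_sdiff_of_subset (Finset.filter_subset _ _),
    Fin.card_filter_val_lt, Finset.card_univ, Fintype.card_fin, min_eq_right hs]

lemma Nat.add_sub_one_div_eq_div_add_one {n q : ℕ} (hq : 0 < q) (hs : 0 < n % q) :
    (n + q - 1) / q = n / q + 1 := by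
  have h := Nat.div_add_mod n q
  have hlt := Nat.mod_lt n hq
  have h' : n + q - 1 = q * (n / q + 1) + (n % q - 1) := by
    have : q * (n / q + 1) = q * (n / q) + q := by ring
    omega
  rw [h', Nat.mul_add_div hq, Nat.div_eq_of_lt (by omega : n % q - 1 < q), Nat.add_zero]

lemma pow_mul_descFactorial_le_descFactorial {q b m : ℕ} (hq : 1 ≤ q) (h : q * b ≤ m) (u : ℕ) :
    q ^ u * b.descFactorial u ≤ m.descFactorial u := by
  induction u with
  | zero => simp
  | succ u ih =>
    have key : q * (b - u) ≤ m - u := by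
      rw [Nat.mul_sub]
      have : u ≤ q * u := Nat.le_mul_of_pos_left u hq
      omega
    calc q ^ (u + 1) * b.descFactorial (u + 1)
        = q * (b - u) * (q ^ u * b.descFactorial u) := by rw [Nat.descFactorial_succ]; ring
      _ ≤ (m - u) * m.descFactorial u := Nat.mul_le_mul key ih
      _ = m.descFactorial (u + 1) := (Nat.descFactorial_succ m u).symm

lemma pow_mul_descFactorial_succ_le {q a n : ℕ} (hq : 1 ≤ q) (ha : q * a ≤ n + q - 1) (u : ℕ) :
    q ^ u * a.descFactorial (u + 1) ≤ a * (n - 1).descFactorial u := by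
  obtain _ | a := a
  · simp
  have h : q * a ≤ n - 1 := by rw [Nat.mul_succ] at ha; omega
  rw [Nat.succ_descFactorial_succ, mul_left_comm]
  exact Nat.mul_le_mul_left _ (pow_mul_descFactorial_le_descFactorial hq h u)

lemma pow_mul_sum_descFactorial_le {ι : Type*} (s : Finset ι) {q n : ℕ} (hq : 1 ≤ q)
    (a : ι → ℕ) (ha : ∀ i ∈ s, q * a i ≤ n + q - 1) (hsum : ∑ i ∈ s, a i = n) (u : ℕ) :
    q ^ u * ∑ i ∈ s, (a i).descFactorial (u + 1) ≤ n.descFactorial (u + 1) := by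
  calc q ^ u * ∑ i ∈ s, (a i).descFactorial (u + 1)
      ≤ ∑ i ∈ s, a i * (n - 1).descFactorial u := by
        rw [Finset.mul_sum]
        exact Finset.sum_le_sum fun i hi => pow_mul_descFactorial_succ_le hq (ha i hi) u
    _ = n * (n - 1).descFactorial u := by rw [← Finset.sum_mul, hsum]
    _ = n.descFactorial (u + 1) := by
        obtain _ | n := n
        · simp
        · rw [Nat.succ_descFactorial_succ, Nat.add_sub_cancel]

lemma natCast_le_zpow_one_sub_mul {q u X N : ℕ} (hq : 0 < q) (h : q ^ u * X ≤ N) :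
    (X : ℝ) ≤ (q : ℝ) ^ ((1 : ℤ) - ((u + 1 : ℕ) : ℤ)) * N := by
  have hpow : (q : ℝ) ^ ((1 : ℤ) - ((u + 1 : ℕ) : ℤ)) = ((q : ℝ) ^ u)⁻¹ := by
    rw [show (1 : ℤ) - ((u + 1 : ℕ) : ℤ) = -(u : ℤ) by push_cast; ring, zpow_neg, zpow_natCast]
  rw [hpow, le_inv_mul_iff₀ (by positivity)]
  exact_mod_cast h

def turanPart (n q : ℕ) (r : Fin q) : Set (Fin n) := {i | (i : ℕ) % q = r}

lemma turanColoring_apply (n k : ℕ) (i j : Fin n) :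
    turanColoring n k s(i, j) = if (i : ℕ) % (k - 1) = j % (k - 1) then 0 else 1 := rfl

lemma iUnion_turanPart (n : ℕ) {q : ℕ} (hq : 0 < q) : ⋃ r, turanPart n q r = Set.univ :=
  Set.eq_univ_of_forall fun i => Set.mem_iUnion.2 ⟨⟨i % q, Nat.mod_lt _ hq⟩, rfl⟩

lemma pairwise_disjoint_turanPart (n q : ℕ) : Pairwise (Disjoint on turanPart n q) :=
  fun _ _ hrr' => Set.disjoint_left.2 fun _ hr hr' => hrr' (Fin.ext (hr.symm.trans hr'))

lemma ncard_turanPart (n : ℕ) {q : ℕ} (hq : 0 < q) (r : Fin q) :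
    (turanPart n q r).ncard = if (r : ℕ) < n % q then (n + q - 1) / q else n / q := by
  have hcount := Nat.count_modEq_card (b := n) hq r
  rw [Nat.count_eq_card_filter_range, Nat.mod_eq_of_lt r.isLt] at hcount
  have hcard : (turanPart n q r).ncard = ((Finset.range n).filter (· ≡ r [MOD q])).card := by
    rw [turanPart, Set.ncard_eq_toFinset_card', Set.toFinset_ofPred, Finset.card_filter,
      Finset.card_filter, Fin.sum_univ_eq_sum_range (fun i => if i % q = r then 1 else 0)]
    simp only [Nat.ModEq, Nat.mod_eq_of_lt r.isLt]
  rw [hcard, hcount]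
  split_ifs with hr
  · exact (Nat.add_sub_one_div_eq_div_add_one hq (by omega)).symm
  · rfl

lemma sum_ncard_turanPart (n : ℕ) {q : ℕ} (hq : 0 < q) : ∑ r, (turanPart n q r).ncard = n := by
  rw [← finsum_eq_sum_of_fintype, ← Set.ncard_iUnion_of_finite (fun _ => Set.toFinite _)
    (pairwise_disjoint_turanPart n q), iUnion_turanPart n hq, Set.ncard_univ, Nat.card_fin]

section TuranCopies

variable {α : Type*} {H : SimpleGraph α} {k : ℕ}

lemma setOf_mono_turanColoring (hk : 2 ≤ k) (hconn : H.Connected)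
    (hchrom : H.chromaticNumber = k) (n : ℕ) :
    {f : α → Fin n | Function.Injective f ∧
        ∃ col : Fin 2, ∀ v w, H.Adj v w → turanColoring n k s(f v, f w) = col} =
      ⋃ r, {f : α → Fin n | Function.Injective f ∧ ∀ v, f v ∈ turanPart n (k - 1) r} := by
  ext f
  simp only [Set.mem_ofPred_eq, Set.mem_iUnion, turanColoring_apply]
  constructor
  · rintro ⟨hf, col, hcol⟩
    have hred : col = 0 := by
      by_contra hblue
      have hcol' : ∀ v w, H.Adj v w → (f v : ℕ) % (k - 1) ≠ (f w : ℕ) % (k - 1) :=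
        fun v w h hvw => hblue (by simpa [hvw] using (hcol v w h).symm)
      have := (H.colorable_of_forall_adj_ne _ (fun v => Nat.mod_lt _ (by omega)) hcol')
        |>.chromaticNumber_le
      rw [hchrom] at this
      exact absurd (by exact_mod_cast this : k ≤ k - 1) (by omega)
    subst hred
    obtain ⟨v₀⟩ := hconn.nonempty
    refine ⟨⟨(f v₀ : ℕ) % (k - 1), Nat.mod_lt _ (by omega)⟩, hf, fun v => ?_⟩
    refine hconn.preconnected.apply_eq_of_forall_adj (g := fun v => (f v : ℕ) % (k - 1))
      (fun v w h => ?_) v v₀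
    by_contra hvw
    simpa [hvw] using hcol v w h
  · rintro ⟨r, hf, hr⟩
    exact ⟨hf, 0, fun v w _ => if_pos ((hr v).trans (hr w).symm)⟩

lemma monoCopies_turanColoring [Fintype α] (hk : 2 ≤ k) (hconn : H.Connected)
    (hchrom : H.chromaticNumber = k) (n : ℕ) :
    monoCopies H (turanColoring n k) =
      ∑ r, (turanPart n (k - 1) r).ncard.descFactorial (Fintype.card α) := by
  obtain ⟨v₀⟩ := hconn.nonempty
  have hdisj : Pairwise (Disjoint on fun r =>
      {f : α → Fin n | Function.Injective f ∧ ∀ v, f v ∈ turanPart n (k - 1) r}) :=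
    fun r r' hrr' => Set.disjoint_left.2 fun f hf hf' =>
      Set.disjoint_left.1 (pairwise_disjoint_turanPart n _ hrr') (hf.2 v₀) (hf'.2 v₀)
  rw [monoCopies, setOf_mono_turanColoring hk hconn hchrom,
    Set.ncard_iUnion_of_finite (fun _ => Set.toFinite _) hdisj, finsum_eq_sum_of_fintype]
  simp_rw [ncard_setOf_injective_mapsTo]

end TuranCopies

theorem statement2_general (k t : ℕ) (hk : 2 ≤ k) (H : SimpleGraph (Fin t))
    (hconn : H.Connected) (hchrom : H.chromaticNumber = (k : ℕ∞))
    (n : ℕ) :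
    (minMono H n 2 : ℝ) ≤ ((k : ℝ) - 1) ^ ((1 : ℤ) - (t : ℤ)) * (n.descFactorial t : ℝ) ∧
    monoCopies H (turanColoring n k) =
      (k - 1 - n % (k - 1)) * ((n / (k - 1)).descFactorial t)
        + (n % (k - 1)) * (((n + (k - 1) - 1) / (k - 1)).descFactorial t) ∧
    (((k - 1 - n % (k - 1)) * ((n / (k - 1)).descFactorial t)
        + (n % (k - 1)) * (((n + (k - 1) - 1) / (k - 1)).descFactorial t) : ℕ) : ℝ) ≤
      ((k : ℝ) - 1) ^ ((1 : ℤ) - (t : ℤ)) * (n.descFactorial t : ℝ) := by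
  obtain ⟨u, rfl⟩ : ∃ u, t = u + 1 := Nat.exists_eq_add_one.2 (Fin.pos hconn.nonempty.some)
  have hq : 0 < k - 1 := by omega
  have hcount := monoCopies_turanColoring hk hconn hchrom n
  rw [Fintype.card_fin] at hcount
  have hclosed : monoCopies H (turanColoring n k) =
      (k - 1 - n % (k - 1)) * ((n / (k - 1)).descFactorial (u + 1))
        + (n % (k - 1)) * (((n + (k - 1) - 1) / (k - 1)).descFactorial (u + 1)) := by
    simp_rw [hcount, ncard_turanPart n hq, apply_ite (Nat.descFactorial · (u + 1)),
      Fin.sum_ite_val_lt (Nat.mod_lt n hq).le, smul_eq_mul]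
    ring
  have hbound : (k - 1) ^ u * monoCopies H (turanColoring n k) ≤ n.descFactorial (u + 1) := by
    rw [hcount]
    refine pow_mul_sum_descFactorial_le _ hq _ (fun r _ => ?_) (sum_ncard_turanPart n hq) u
    rw [ncard_turanPart n hq]
    split_ifs
    · exact Nat.mul_div_le _ _
    · exact (Nat.mul_div_le n _).trans (by omega)
  have hreal := natCast_le_zpow_one_sub_mul hq hbound
  rw [Nat.cast_pred (by omega)] at hreal
  exact ⟨(Nat.cast_le.2 (ciInf_le (OrderBot.bddBelow _) _)).trans hreal, hclosed,
    hclosed ▸ hreal⟩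

theorem statement2 (k t : ℕ) (hk : 2 ≤ k) (H : SimpleGraph (Fin t))
    (hconn : H.Connected) (hchrom : H.chromaticNumber = (k : ℕ∞))
    (n : ℕ) (hn : t ≤ n) :
    (minMono H n 2 : ℝ) ≤ ((k : ℝ) - 1) ^ ((1 : ℤ) - (t : ℤ)) * (n.descFactorial t : ℝ) ∧
    monoCopies H (turanColoring n k) =
      (k - 1 - n % (k - 1)) * ((n / (k - 1)).descFactorial t)
        + (n % (k - 1)) * (((n + (k - 1) - 1) / (k - 1)).descFactorial t) ∧
    (((k - 1 - n % (k - 1)) * ((n / (k - 1)).descFactorial t)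
        + (n % (k - 1)) * (((n + (k - 1) - 1) / (k - 1)).descFactorial t) : ℕ) : ℝ) ≤
      ((k : ℝ) - 1) ^ ((1 : ℤ) - (t : ℤ)) * (n.descFactorial t : ℝ) :=
  statement2_general k t hk H hconn hchrom n
end

section
/- Let H be a connected graph with t vertices and chromatic number k ≥ 2. Then the Ramsey multiplicity constant satisfies c(H) ≤ (k−1)^{1−t}. -/
open Filter

/-!
Deleting a vertex of `K_{n+1}` and averaging over the `n + 1` choices shows that
`m(H, n) / (n)_t` is non-decreasing; being at most `1`, it converges. For the bound, colour
`K_n` by the Turán colouring with `k - 1` parts. A blue copy of `H` would induce a proper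
`(k - 1)`-colouring of `H`, so every monochromatic copy is red and, `H` being connected, lies
inside a single part. There are at most `(k - 1) (n / (k - 1) + 1) ^ t` such maps, and since
`(n)_t ≥ (n + 1 - t) ^ t` the ratio is eventually at most `(k - 1) ^ (1 - t)` times a factor
tending to `1`.
-/

open Finset

def IsMonoCopy {α : Type*} (H : SimpleGraph α) {n c : ℕ} (χ : Sym2 (Fin n) → Fin c)
    (f : α → Fin n) : Prop :=
  Function.Injective f ∧ ∃ col : Fin c, ∀ v w, H.Adj v w → χ s(f v, f w) = col

lemma sum_card_filter_notMem_image {α β : Type*} [Fintype α] [Fintype β] [DecidableEq β]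
    (S : Finset (α → β)) (hS : ∀ f ∈ S, Function.Injective f) :
    ∑ b, #{f ∈ S | b ∉ univ.image f} = (Fintype.card β - Fintype.card α) * #S := by
  have hcompl (f : α → β) : #{b | b ∉ univ.image f} = #(univ.image f)ᶜ := by
    rw [filter_not, filter_mem_eq_inter, univ_inter, compl_eq_univ_sdiff]
  calc ∑ b, #{f ∈ S | b ∉ univ.image f} = ∑ f ∈ S, #{b | b ∉ univ.image f} :=
        (sum_card_bipartiteAbove_eq_sum_card_bipartiteBelow _).symm
    _ = ∑ _f ∈ S, (Fintype.card β - Fintype.card α) := sum_congr rfl fun f hf => by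
        rw [hcompl, card_compl, card_image_of_injective _ (hS f hf), card_univ]
    _ = _ := by rw [sum_const, smul_eq_mul, mul_comm]

lemma SimpleGraph.Preconnected.apply_eq_of_forall_adj_s3 {V β : Type*} {G : SimpleGraph V}
    (hG : G.Preconnected) {g : V → β} (hg : ∀ v w, G.Adj v w → g v = g w) (a b : V) :
    g a = g b := by
  obtain ⟨p⟩ := hG a b
  induction p with
  | nil => rfl
  | cons hadj _ ih => exact (hg _ _ hadj).trans ih

lemma card_filter_val_mod_eq_le (n m r : ℕ) : #{x : Fin n | (x : ℕ) % m = r} ≤ n / m + 1 := by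
  calc #{x : Fin n | (x : ℕ) % m = r} ≤ #(range (n / m + 1)) := by
        refine card_le_card_of_injOn (fun x => (x : ℕ) / m) (fun x _ => ?_) fun x hx y hy hxy => ?_
        · simpa [Nat.lt_succ_iff] using Nat.div_le_div_right x.isLt.le
        · simp only [coe_filter, mem_univ, true_and, Set.mem_ofPred_eq] at hx hy
          rw [Fin.ext_iff, ← Nat.div_add_mod x m, ← Nat.div_add_mod y m, hx, hy]
          exact congrArg (m * · + r) hxy
    _ = n / m + 1 := card_range _

section Monotonicity

variable {α : Type*} [Fintype α] (H : SimpleGraph α)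

lemma minMono_le_monoCopies {n c : ℕ} (χ : Sym2 (Fin n) → Fin c) :
    minMono H n c ≤ monoCopies H χ :=
  ciInf_le (OrderBot.bddBelow _) χ

lemma minMono_le_ncard_avoiding {n c : ℕ} (χ : Sym2 (Fin (n + 1)) → Fin c) (v : Fin (n + 1)) :
    minMono H n c ≤ {f | IsMonoCopy H χ f ∧ v ∉ Set.range f}.ncard := by
  refine (minMono_le_monoCopies H (χ ∘ Sym2.map v.succAbove)).trans ?_
  refine Set.ncard_le_ncard_of_injOn (v.succAbove ∘ ·) ?_
    (fun g _ g' _ h => (Fin.succAbove_right_injective.comp_left h)) (Set.toFinite _)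
  rintro g ⟨hg, col, hcol⟩
  refine ⟨⟨Fin.succAbove_right_injective.comp hg, col, fun a b hab => ?_⟩, ?_⟩
  · simpa [Sym2.map_mk] using hcol a b hab
  · rintro ⟨u, hu⟩
    exact Fin.succAbove_ne v (g u) hu

lemma succ_mul_minMono_le {n c : ℕ} [NeZero c] :
    (n + 1) * minMono H n c ≤ (n + 1 - Fintype.card α) * minMono H (n + 1) c := by
  classical
  obtain ⟨χ, hχ⟩ := ciInf_mem fun χ : Sym2 (Fin (n + 1)) → Fin c => monoCopies H χ
  let S : Finset (α → Fin (n + 1)) := {f | IsMonoCopy H χ f}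
  have hS : monoCopies H χ = #S := by
    rw [monoCopies, ← Set.ncard_coe_finset]; congr 1; ext f
    simp only [Set.mem_ofPred_eq, coe_filter, mem_univ, true_and, S]
    rfl
  have havoid (v : Fin (n + 1)) :
      {f | IsMonoCopy H χ f ∧ v ∉ Set.range f}.ncard = #{f ∈ S | v ∉ univ.image f} := by
    rw [← Set.ncard_coe_finset]; congr 1; ext f; simp [S]
  calc (n + 1) * minMono H n c = ∑ _v : Fin (n + 1), minMono H n c := by simp
    _ ≤ ∑ v, #{f ∈ S | v ∉ univ.image f} :=
        sum_le_sum fun v _ => (minMono_le_ncard_avoiding H χ v).trans (havoid v).le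
    _ = (n + 1 - Fintype.card α) * minMono H (n + 1) c := by
        rw [sum_card_filter_notMem_image S fun f hf => (mem_filter.mp hf).2.1, Fintype.card_fin,
          ← hS, minMono, ← hχ]

lemma monotone_minMono_div_descFactorial {c : ℕ} [NeZero c] :
    Monotone fun n : ℕ => (minMono H n c : ℝ) / n.descFactorial (Fintype.card α) := by
  set t := Fintype.card α
  refine monotone_nat_of_le_succ fun n => ?_
  rcases lt_or_ge n t with hnt | htn
  · rw [Nat.descFactorial_eq_zero_iff_lt.mpr hnt, Nat.cast_zero, div_zero]
    positivity
  have hpos (m : ℕ) (hm : t ≤ m) : (0 : ℝ) < m.descFactorial t := by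
    exact_mod_cast Nat.descFactorial_pos.mpr hm
  rw [div_le_div_iff₀ (hpos n htn) (hpos (n + 1) (by omega))]
  have key : minMono H n c * (n + 1).descFactorial t ≤ minMono H (n + 1) c * n.descFactorial t := by
    refine Nat.le_of_mul_le_mul_left ?_ (by omega : 0 < n + 1 - t)
    calc (n + 1 - t) * (minMono H n c * (n + 1).descFactorial t)
        = (n + 1) * minMono H n c * n.descFactorial t := by
          rw [mul_left_comm, Nat.succ_descFactorial]; ring
      _ ≤ (n + 1 - t) * minMono H (n + 1) c * n.descFactorial t :=
          Nat.mul_le_mul_right _ (succ_mul_minMono_le H)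
      _ = _ := by ring
  exact_mod_cast key

lemma ncard_setOf_injective (β : Type*) [Fintype β] :
    {f : α → β | Function.Injective f}.ncard = (Fintype.card β).descFactorial (Fintype.card α) := by
  rw [← Nat.card_coe_set_eq]
  exact (Nat.card_congr (Equiv.subtypeInjectiveEquivEmbedding α β)).trans
    (by rw [Nat.card_eq_fintype_card, Fintype.card_embedding_eq])

lemma minMono_le_descFactorial (n c : ℕ) [NeZero c] :
    minMono H n c ≤ n.descFactorial (Fintype.card α) := by
  refine (minMono_le_monoCopies H fun _ => 0).trans ?_
  calc monoCopies H (fun _ => (0 : Fin c)) ≤ {f : α → Fin n | Function.Injective f}.ncard :=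
        Set.ncard_le_ncard fun f hf => hf.1
    _ = n.descFactorial (Fintype.card α) := by rw [ncard_setOf_injective, Fintype.card_fin]

lemma tendsto_minMono_div_descFactorial (c : ℕ) [NeZero c] :
    Tendsto (fun n : ℕ => (minMono H n c : ℝ) / n.descFactorial (Fintype.card α)) atTop
      (nhds (⨆ n : ℕ, (minMono H n c : ℝ) / n.descFactorial (Fintype.card α))) := by
  refine tendsto_atTop_ciSup (monotone_minMono_div_descFactorial H) ⟨1, ?_⟩
  rintro _ ⟨n, rfl⟩
  exact div_le_one_of_le₀ (by exact_mod_cast minMono_le_descFactorial H n c) (by positivity)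

end Monotonicity

lemma turanColoring_mk {n k : ℕ} (i j : Fin n) :
    turanColoring n k s(i, j) = if (i : ℕ) % (k - 1) = (j : ℕ) % (k - 1) then 0 else 1 :=
  rfl

section Turan

variable {α : Type*} {H : SimpleGraph α} {n k : ℕ}

lemma colorable_of_turanColoring_eq_one (hk : 2 ≤ k) {f : α → Fin n}
    (hf : ∀ v w, H.Adj v w → turanColoring n k s(f v, f w) = 1) : H.Colorable (k - 1) := by
  refine ⟨SimpleGraph.Coloring.mk (fun a => ⟨(f a : ℕ) % (k - 1), Nat.mod_lt _ (by omega)⟩)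
    fun {a b} hab heq => ?_⟩
  have := hf a b hab
  rw [turanColoring_mk, if_pos (Fin.val_eq_of_eq heq)] at this
  exact zero_ne_one this

lemma mod_eq_of_turanColoring_eq_zero (hconn : H.Connected) {f : α → Fin n}
    (hf : ∀ v w, H.Adj v w → turanColoring n k s(f v, f w) = 0) (a b : α) :
    (f a : ℕ) % (k - 1) = (f b : ℕ) % (k - 1) := by
  refine hconn.preconnected.apply_eq_of_forall_adj_s3 (g := fun v => (f v : ℕ) % (k - 1))
    (fun v w hvw => ?_) a b
  by_contra hne
  have := hf v w hvw
  rw [turanColoring_mk, if_neg hne] at this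
  exact one_ne_zero this

lemma monoCopies_turanColoring_le [Fintype α] (hk : 2 ≤ k) (hconn : H.Connected)
    (hH : ¬ H.Colorable (k - 1)) :
    monoCopies H (turanColoring n k) ≤ (k - 1) * (n / (k - 1) + 1) ^ Fintype.card α := by
  classical
  set m := k - 1
  let T (r : ℕ) : Finset (Fin n) := {x | (x : ℕ) % m = r}
  obtain ⟨a₀⟩ := hconn.nonempty
  have hsub : {f | IsMonoCopy H (turanColoring n k) f} ⊆
      ↑((range m).biUnion fun r => Fintype.piFinset fun _ : α => T r) := by
    rintro f ⟨-, col, hcol⟩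
    fin_cases col
    · simp only [coe_biUnion, coe_range, Set.mem_iUnion, Fintype.coe_piFinset]
      refine ⟨(f a₀ : ℕ) % m, Nat.mod_lt _ (by omega), fun a _ => ?_⟩
      simpa [T] using mod_eq_of_turanColoring_eq_zero hconn hcol a a₀
    · exact (hH (colorable_of_turanColoring_eq_one hk hcol)).elim
  calc monoCopies H (turanColoring n k)
      ≤ #((range m).biUnion fun r => Fintype.piFinset fun _ : α => T r) :=
        (Set.ncard_le_ncard hsub).trans (Set.ncard_coe_finset _).le
    _ ≤ ∑ r ∈ range m, #(Fintype.piFinset fun _ : α => T r) := card_biUnion_le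
    _ ≤ ∑ _r ∈ range m, (n / m + 1) ^ Fintype.card α := sum_le_sum fun r _ => by
        rw [Fintype.card_piFinset, prod_const, card_univ]
        exact Nat.pow_le_pow_left (card_filter_val_mod_eq_le n m r) _
    _ = m * (n / m + 1) ^ Fintype.card α := by rw [sum_const, card_range, smul_eq_mul]

end Turan

lemma tendsto_natCast_add_div_natCast_add (a b : ℝ) :
    Tendsto (fun n : ℕ => ((n : ℝ) + a) / (n + b)) atTop (nhds 1) := by
  simpa [add_comm] using tendsto_add_mul_div_add_mul_atTop_nhds a b 1 one_ne_zero

lemma natCast_mul_div_add_one_pow_le {m : ℕ} (hm : 0 < m) (n t : ℕ) :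
    ((m * (n / m + 1) ^ t : ℕ) : ℝ) ≤ (m : ℝ) ^ (1 - t : ℤ) * (n + m) ^ t := by
  have hm' : (0 : ℝ) < m := by exact_mod_cast hm
  have hdiv : ((n / m + 1 : ℕ) : ℝ) ≤ (n + m) / m := by
    rw [add_div, div_self hm'.ne', Nat.cast_add_one]
    gcongr
    exact Nat.cast_div_le
  calc ((m * (n / m + 1) ^ t : ℕ) : ℝ) ≤ m * ((n + m) / m) ^ t := by
        push_cast; gcongr; exact_mod_cast hdiv
    _ = (m : ℝ) ^ (1 - t : ℤ) * (n + m) ^ t := by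
        rw [zpow_sub₀ hm'.ne', zpow_one, zpow_natCast, div_pow]; field_simp

lemma minMono_div_descFactorial_le {α : Type*} [Fintype α] {H : SimpleGraph α} {k n : ℕ}
    (hk : 2 ≤ k) (hconn : H.Connected) (hH : ¬ H.Colorable (k - 1)) (hn : Fintype.card α ≤ n) :
    (minMono H n 2 : ℝ) / n.descFactorial (Fintype.card α) ≤
      ((k - 1 : ℕ) : ℝ) ^ (1 - Fintype.card α : ℤ) *
        (((n : ℝ) + (k - 1 : ℕ)) / (n + (1 - Fintype.card α))) ^ Fintype.card α := by
  set t := Fintype.card α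
  have hpos : (0 : ℝ) < n + (1 - t) := by
    have : (t : ℝ) ≤ n := by exact_mod_cast hn
    linarith
  have hmono : (minMono H n 2 : ℝ) ≤ ((k - 1 : ℕ) : ℝ) ^ (1 - t : ℤ) * (n + (k - 1 : ℕ)) ^ t :=
    (Nat.cast_le.mpr ((minMono_le_monoCopies H _).trans
      (monoCopies_turanColoring_le hk hconn hH))).trans
      (natCast_mul_div_add_one_pow_le (by omega) n t)
  have hdesc : (n + (1 - t) : ℝ) ^ t ≤ n.descFactorial t := by
    have := Nat.pow_sub_le_descFactorial n t
    rw [← Nat.cast_le (α := ℝ), Nat.cast_pow, Nat.cast_sub (by omega)] at this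
    simpa only [Nat.cast_add, Nat.cast_one, add_sub_assoc] using this
  calc (minMono H n 2 : ℝ) / n.descFactorial t
      ≤ ((k - 1 : ℕ) : ℝ) ^ (1 - t : ℤ) * (n + (k - 1 : ℕ)) ^ t / (n + (1 - t)) ^ t :=
        div_le_div₀ (by positivity) hmono (pow_pos hpos t) hdesc
    _ = _ := by rw [mul_div_assoc, div_pow]

theorem statement3 (k t : ℕ) (hk : 2 ≤ k) (H : SimpleGraph (Fin t))
    (hconn : H.Connected) (hchrom : H.chromaticNumber = (k : ℕ∞)) :
    ∃ L : ℝ,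
      Tendsto (fun n : ℕ => (minMono H n 2 : ℝ) / (n.descFactorial t : ℝ)) atTop (nhds L) ∧
      L ≤ ((k : ℝ) - 1) ^ ((1 : ℤ) - (t : ℤ)) := by
  have hH : ¬ H.Colorable (k - 1) := fun h => by
    have := h.chromaticNumber_le
    rw [hchrom, Nat.cast_le] at this
    omega
  have hlim := tendsto_minMono_div_descFactorial H 2
  have hbound := ((tendsto_natCast_add_div_natCast_add ((k - 1 : ℕ) : ℝ) (1 - t)).pow t).const_mul
    (((k - 1 : ℕ) : ℝ) ^ (1 - t : ℤ))
  rw [one_pow, mul_one] at hbound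
  simp only [Fintype.card_fin] at hlim
  rw [← Nat.cast_pred (by omega : 0 < k)]
  refine ⟨_, hlim, le_of_tendsto_of_tendsto hlim hbound ?_⟩
  filter_upwards [eventually_ge_atTop t] with n hn
  simpa only [Fintype.card_fin] using
    minMono_div_descFactorial_le hk hconn hH (by simpa only [Fintype.card_fin] using hn)
end

section
/- For every graph H on t vertices, there exists a constant C > 0 such that the following holds. For any n, any 2-coloring χ of E(K_n) with the minimum number of monochromatic labeled copies of H (i.e. m(H,χ) = m(H,n)), and any vertex v of K_n, we have (1 − C/n)·(t/n)·m(H,n) ≤ m_v(H,χ) ≤ (1 + C/n)·(t/n)·m(H,n), where m_v(H,χ) denotes the number of monochromatic labeled copies of H in χ whose image contains v. -/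
open Filter

/-- Monochromatic labeled copies of `F` in `χ` whose image contains `v`. -/
noncomputable def monoCopiesVia {α : Type*} [Fintype α] (F : SimpleGraph α)
    {n c : ℕ} (χ : Sym2 (Fin n) → Fin c) (v : Fin n) : ℕ :=
  Set.ncard {f : α → Fin n | Function.Injective f ∧ (∃ u, f u = v) ∧
    ∃ col : Fin c, ∀ a b, F.Adj a b → χ s(f a, f b) = col}

/-!
By Ramsey's theorem every set of `centralBinom t` vertices spans a monochromatic `K_t`, hence a
monochromatic copy of `H`; double counting such sets gives `m(H,n) ≥ c n^t` for large `n`.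
In an optimal coloring, recoloring `v` as a clone of `u` cannot lower the count. Copies avoiding
`v` are unchanged and copies through `v` but not `u` map injectively to copies through `u`, so this
gives `m_v ≤ m_u + O(n^(t-2))` for all `u, v`. Since `∑ u, m_u = t m(H,n)`, every `m_v` lies within
`O(n^(t-1)) = O(m(H,n)/n)` of the average `t m(H,n) / n`.
-/

universe u

open Finset Function

section Ramsey

variable {V : Type*} [DecidableEq V] {r : V → V → Prop}

theorem exists_insert_pairwise [Std.Symm r] {S : Finset V} {v : V} (hv : v ∈ S) {k : ℕ}
    (h : ∃ A ⊆ S.erase v, #A = k ∧ (∀ w ∈ A, r v w) ∧ (A : Set V).Pairwise r) :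
    ∃ A ⊆ S, #A = k + 1 ∧ (A : Set V).Pairwise r := by
  obtain ⟨A, hAS, hcard, hvA, hA⟩ := h
  have hv' : v ∉ A := fun h => by simpa using hAS h
  refine ⟨insert v A, insert_subset hv (hAS.trans (erase_subset _ _)),
    by rw [card_insert_of_notMem hv', hcard], ?_⟩
  rw [coe_insert, Set.pairwise_insert_of_symm_of_notMem (by simpa using hv')]
  exact ⟨hA, hvA⟩

theorem ramsey_pairwise [Std.Symm r] :
    ∀ (s t : ℕ) (S : Finset V), (s + t).choose s ≤ #S →
      (∃ A ⊆ S, #A = s ∧ (A : Set V).Pairwise r) ∨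
      (∃ A ⊆ S, #A = t ∧ (A : Set V).Pairwise fun a b => ¬ r a b)
  | 0, _, _, _ => Or.inl ⟨∅, empty_subset _, rfl, by simp⟩
  | _ + 1, 0, _, _ => Or.inr ⟨∅, empty_subset _, rfl, by simp⟩
  | s + 1, t + 1, S, hS => by
    classical
    have : Std.Symm fun a b => ¬ r a b := ⟨fun a b h h' => h (Std.Symm.symm _ _ h')⟩
    obtain ⟨v, hv⟩ : S.Nonempty := card_pos.1 ((Nat.choose_pos (by omega)).trans_le hS)
    set red := (S.erase v).filter (r v)
    set blue := (S.erase v).filter fun w => ¬ r v w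
    have hsplit : #red + #blue + 1 = #S := by
      rw [card_filter_add_card_filter_not, card_erase_add_one hv]
    have hpascal : (s + 1 + (t + 1)).choose (s + 1) =
        (s + (t + 1)).choose s + (s + 1 + t).choose (s + 1) := by
      rw [show s + 1 + (t + 1) = s + (t + 1) + 1 by omega, Nat.choose_succ_succ,
        show s + 1 + t = s + (t + 1) by omega]
    have hred_sub : red ⊆ S := (filter_subset _ _).trans (erase_subset _ _)
    have hblue_sub : blue ⊆ S := (filter_subset _ _).trans (erase_subset _ _)
    by_cases hred : (s + (t + 1)).choose s ≤ #red
    · rcases ramsey_pairwise s (t + 1) red hred with ⟨A, hA, hcard, hAr⟩ | ⟨A, hA, hAb⟩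
      · exact Or.inl <| exists_insert_pairwise hv
          ⟨A, hA.trans (filter_subset _ _), hcard, fun w hw => (mem_filter.1 (hA hw)).2, hAr⟩
      · exact Or.inr ⟨A, hA.trans hred_sub, hAb⟩
    · rcases ramsey_pairwise (s + 1) t blue (by omega) with
        ⟨A, hA, hAr⟩ | ⟨A, hA, hcard, hAb⟩
      · exact Or.inl ⟨A, hA.trans hblue_sub, hAr⟩
      · exact Or.inr <| exists_insert_pairwise hv
          ⟨A, hA.trans (filter_subset _ _), hcard, fun w hw => (mem_filter.1 (hA hw)).2, hAb⟩
termination_by s t => s + t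

end Ramsey

section Supersaturation

variable {α V : Type*} [Fintype α]

def monoSet (F : SimpleGraph α) (χ : Sym2 V → Fin 2) : Set (α → V) :=
  {f | Injective f ∧ ∃ col : Fin 2, ∀ a b, F.Adj a b → χ s(f a, f b) = col}

theorem exists_mem_monoSet_of_pairwise (F : SimpleGraph α) {χ : Sym2 V → Fin 2} {col : Fin 2}
    {A : Finset V} (hA : #A = Fintype.card α)
    (hcol : (A : Set V).Pairwise fun a b => χ s(a, b) = col) :
    ∃ f ∈ monoSet F χ, ∀ a, f a ∈ A := by
  let e : α ≃ A := Fintype.equivOfCardEq (by rw [Fintype.card_coe, hA])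
  have hinj : Injective fun a => (e a : V) := Subtype.val_injective.comp e.injective
  exact ⟨fun a => e a, ⟨hinj, col, fun a b hab => hcol (e a).2 (e b).2 (hinj.ne hab.ne)⟩,
    fun a => (e a).2⟩

theorem exists_mem_monoSet_forall_mem [Fintype V] (F : SimpleGraph α) (χ : Sym2 V → Fin 2)
    {S : Finset V} (hS : (Fintype.card α).centralBinom ≤ #S) :
    ∃ f ∈ monoSet F χ, ∀ a, f a ∈ S := by
  classical
  have : Std.Symm fun a b : V => χ s(a, b) = 0 := ⟨fun a b h => by rwa [Sym2.eq_swap]⟩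
  rw [Nat.centralBinom_eq_two_mul_choose, two_mul] at hS
  rcases ramsey_pairwise (r := fun a b : V => χ s(a, b) = 0) _ _ S hS with
    ⟨A, hAS, hA, hcol⟩ | ⟨A, hAS, hA, hcol⟩
  · obtain ⟨f, hf, hfA⟩ := exists_mem_monoSet_of_pairwise F hA hcol
    exact ⟨f, hf, fun a => hAS (hfA a)⟩
  · obtain ⟨f, hf, hfA⟩ := exists_mem_monoSet_of_pairwise F (col := 1) hA
      (hcol.imp fun a b => Fin.eq_one_of_ne_zero _)
    exact ⟨f, hf, fun a => hAS (hfA a)⟩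

theorem choose_le_choose_mul_ncard [Fintype V] {P : Set (α → V)} (hP : ∀ f ∈ P, Injective f)
    {R : ℕ} (hαR : Fintype.card α ≤ R) (hRV : R ≤ Fintype.card V)
    (hcover : ∀ S : Finset V, #S = R → ∃ f ∈ P, ∀ a, f a ∈ S) :
    (Fintype.card V).choose (Fintype.card α) ≤ R.choose (Fintype.card α) * P.ncard := by
  classical
  set k := Fintype.card α
  set N := Fintype.card V
  set Pf := (Set.toFinite P).toFinset
  have hcount : ∀ f ∈ Pf, #((powersetCard R univ).filter (univ.image f ⊆ ·)) =
      (N - k).choose (R - k) := by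
    intro f hf
    have hcard : #(univ.image f) = k :=
      card_image_of_injective _ (hP f ((Set.Finite.mem_toFinset _).1 hf))
    rw [card_filter_powersetCard_subset _ _ _ (subset_univ _) (hcard ▸ hαR), hcard, card_univ]
  have hcover' : N.choose R ≤ #Pf * (N - k).choose (R - k) := by
    calc N.choose R = #(powersetCard R (univ : Finset V)) := by simp [N]
      _ ≤ #(Pf.biUnion fun f => (powersetCard R univ).filter (univ.image f ⊆ ·)) := by
        refine card_le_card fun S hS => ?_
        obtain ⟨f, hf, hfS⟩ := hcover S (mem_powersetCard.1 hS).2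
        exact mem_biUnion.2 ⟨f, (Set.Finite.mem_toFinset _).2 hf,
          mem_filter.2 ⟨hS, image_subset_iff.2 fun a _ => hfS a⟩⟩
      _ ≤ ∑ f ∈ Pf, #((powersetCard R univ).filter (univ.image f ⊆ ·)) := card_biUnion_le
      _ = #Pf * (N - k).choose (R - k) := by rw [sum_congr rfl hcount, sum_const, smul_eq_mul]
  have hpos : 0 < (N - k).choose (R - k) := Nat.choose_pos (by omega)
  refine Nat.le_of_mul_le_mul_right ?_ hpos
  calc N.choose k * (N - k).choose (R - k) = N.choose R * R.choose k := (Nat.choose_mul hαR).symm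
    _ ≤ #Pf * (N - k).choose (R - k) * R.choose k := Nat.mul_le_mul_right _ hcover'
    _ = R.choose k * P.ncard * (N - k).choose (R - k) := by
      rw [Set.ncard_eq_toFinset_card P]; ring

theorem choose_le_choose_centralBinom_mul_ncard_monoSet [Fintype V] (F : SimpleGraph α)
    (χ : Sym2 V → Fin 2) (hV : (Fintype.card α).centralBinom ≤ Fintype.card V) :
    (Fintype.card V).choose (Fintype.card α) ≤
      (Fintype.card α).centralBinom.choose (Fintype.card α) * (monoSet F χ).ncard :=
  choose_le_choose_mul_ncard (fun _ hf => hf.1) (Nat.centralBinom_strictMono.id_le _) hV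
    fun _ hS => exists_mem_monoSet_forall_mem F χ hS.ge

end Supersaturation

section VertexCounts

variable {α V : Type*} [Fintype α] [Fintype V]

theorem sum_ncard_inter_mem_range {P : Set (α → V)} (hP : ∀ f ∈ P, Injective f) :
    ∑ v, (P ∩ {f | v ∈ Set.range f}).ncard = Fintype.card α * P.ncard := by
  classical
  set Pf := (Set.toFinite P).toFinset
  have hinter : ∀ v, P ∩ {f | v ∈ Set.range f} =
      ↑(Pf.bipartiteAbove (· ∈ Set.range ·) v) := by
    intro v; ext f; simp [Pf, bipartiteAbove]
  have hrange : ∀ f ∈ Pf, #(univ.bipartiteBelow (· ∈ Set.range ·) f) = Fintype.card α := by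
    intro f hf
    have : univ.bipartiteBelow (· ∈ Set.range ·) f = univ.image f := by
      ext; simp [bipartiteBelow]
    rw [this, card_image_of_injective _ (hP f ((Set.Finite.mem_toFinset _).1 hf)), card_univ]
  simp_rw [hinter, Set.ncard_coe_finset]
  rw [sum_card_bipartiteAbove_eq_sum_card_bipartiteBelow, sum_congr rfl hrange, sum_const,
    smul_eq_mul, mul_comm, Set.ncard_eq_toFinset_card P]

theorem card_apply_eq_and_apply_eq_le [DecidableEq α] {a b : α} (hab : a ≠ b) (u v : V) :
    Nat.card {f : α → V // f a = u ∧ f b = v} ≤ Fintype.card V ^ (Fintype.card α - 2) := by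
  have hinj : Injective fun (f : {f : α → V // f a = u ∧ f b = v})
      (i : {i // i ∉ ({a, b} : Finset α)}) => f.1 i := by
    rintro ⟨f, hfa, hfb⟩ ⟨g, hga, hgb⟩ hfg
    refine Subtype.ext (funext fun i => ?_)
    change f i = g i
    by_cases hi : i ∈ ({a, b} : Finset α)
    · rcases mem_insert.1 hi with rfl | hi
      · rw [hfa, hga]
      · rw [mem_singleton.1 hi, hfb, hgb]
    · exact congrFun hfg ⟨i, hi⟩
  refine (Nat.card_le_card_of_injective _ hinj).trans_eq ?_
  rw [Nat.card_fun, Nat.card_eq_fintype_card, Nat.card_eq_fintype_card, Fintype.card_subtype_compl,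
    Fintype.card_coe, card_pair hab]

theorem ncard_mem_range_and_mem_range_le {u v : V} (huv : u ≠ v) :
    {f : α → V | u ∈ Set.range f ∧ v ∈ Set.range f}.ncard ≤
      Fintype.card α * (Fintype.card α - 1) * Fintype.card V ^ (Fintype.card α - 2) := by
  classical
  set T := univ.offDiag.biUnion fun p : α × α =>
    univ.filter fun f : α → V => f p.1 = u ∧ f p.2 = v
  have hsub : {f : α → V | u ∈ Set.range f ∧ v ∈ Set.range f} ⊆ T := by
    rintro f ⟨⟨a, rfl⟩, ⟨b, rfl⟩⟩
    have hab : a ≠ b := fun h => huv (congrArg f h)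
    simpa [T] using ⟨a, rfl, b, hab, rfl⟩
  calc _ ≤ (T : Set (α → V)).ncard := Set.ncard_le_ncard hsub
    _ ≤ ∑ p ∈ univ.offDiag, #(univ.filter fun f : α → V => f p.1 = u ∧ f p.2 = v) := by
      rw [Set.ncard_coe_finset]; exact card_biUnion_le
    _ ≤ #(univ.offDiag : Finset (α × α)) * Fintype.card V ^ (Fintype.card α - 2) :=
      sum_le_card_nsmul _ _ _ fun p hp =>
        (Fintype.card_subtype _).symm.trans_le <| (Nat.card_eq_fintype_card).symm.trans_le <|
          card_apply_eq_and_apply_eq_le (mem_offDiag.1 hp).2.2 u v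
    _ = _ := by rw [offDiag_card, card_univ, Nat.mul_sub_one]

end VertexCounts

section Clone

variable {α V : Type*} [DecidableEq V] (F : SimpleGraph α)

def cloneColoring (χ : Sym2 V → Fin 2) (u v : V) : Sym2 V → Fin 2 :=
  fun e => χ (e.map (update id v u))

theorem cloneColoring_mk (χ : Sym2 V → Fin 2) (u v x y : V) :
    cloneColoring χ u v s(x, y) = χ s(update id v u x, update id v u y) := by
  simp [cloneColoring]

theorem monoSet_cloneColoring_diff (χ : Sym2 V → Fin 2) (u v : V) :
    monoSet F (cloneColoring χ u v) \ {f | v ∈ Set.range f} =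
      monoSet F χ \ {f | v ∈ Set.range f} := by
  ext f
  simp only [Set.mem_sdiff, Set.mem_ofPred_eq, Set.mem_range, not_exists]
  refine and_congr_left fun hv => ?_
  have hfix : ∀ a, update id v u (f a) = f a := fun a => update_of_ne (hv a) _ _
  simp only [monoSet, Set.mem_ofPred_eq, cloneColoring_mk, hfix]

theorem ncard_monoSet_cloneColoring_inter_diff_le [Finite α] [Finite V] (χ : Sym2 V → Fin 2)
    (u v : V) :
    ((monoSet F (cloneColoring χ u v) ∩ {f | v ∈ Set.range f}) \
        {f | u ∈ Set.range f}).ncard ≤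
      (monoSet F χ ∩ {f | u ∈ Set.range f}).ncard := by
  set ρ := update (id : V → V) v u
  have hρ : ∀ x y, x ≠ u → y ≠ u → ρ x = ρ y → x = y := by
    intro x y hx hy hxy
    by_cases hxv : x = v <;> by_cases hyv : y = v <;>
      simp_all [ρ, update_of_ne]
  set S := (monoSet F (cloneColoring χ u v) ∩ {f | v ∈ Set.range f}) \ {f | u ∈ Set.range f}
  have hinjOn : Set.InjOn (ρ ∘ ·) S := fun f hf g hg hfg => funext fun a =>
    hρ _ _ (fun h => hf.2 ⟨a, h⟩) (fun h => hg.2 ⟨a, h⟩) (congrFun hfg a)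
  have hmaps : Set.MapsTo (ρ ∘ ·) S (monoSet F χ ∩ {f | u ∈ Set.range f}) := by
    rintro f ⟨⟨⟨hinj, col, hcol⟩, a, rfl⟩, hu⟩
    have hfu : ∀ x, f x ≠ u := fun x h => hu ⟨x, h⟩
    refine ⟨⟨fun x y hxy => hinj (hρ _ _ (hfu x) (hfu y) hxy), col, fun x y hxy => ?_⟩, a,
      by simp [ρ]⟩
    simpa [cloneColoring_mk] using hcol x y hxy
  exact Set.ncard_le_ncard_of_injOn _ hmaps hinjOn

theorem ncard_monoSet_cloneColoring_add_le [Finite α] [Finite V] (χ : Sym2 V → Fin 2)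
    (u v : V) :
    (monoSet F (cloneColoring χ u v)).ncard + (monoSet F χ ∩ {f | v ∈ Set.range f}).ncard ≤
      (monoSet F χ).ncard + (monoSet F χ ∩ {f | u ∈ Set.range f}).ncard +
        {f : α → V | u ∈ Set.range f ∧ v ∈ Set.range f}.ncard := by
  have hclone := ncard_monoSet_cloneColoring_inter_diff_le F χ u v
  set ψ := cloneColoring χ u v
  have hχ := Set.ncard_inter_add_ncard_sdiff_eq_ncard (monoSet F χ) {f | v ∈ Set.range f}
  have hψ := Set.ncard_inter_add_ncard_sdiff_eq_ncard (monoSet F ψ) {f | v ∈ Set.range f}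
  have hψv := Set.ncard_inter_add_ncard_sdiff_eq_ncard
    (monoSet F ψ ∩ {f | v ∈ Set.range f}) {f | u ∈ Set.range f}
  have hboth : (monoSet F ψ ∩ {f | v ∈ Set.range f} ∩ {f | u ∈ Set.range f}).ncard ≤
      {f : α → V | u ∈ Set.range f ∧ v ∈ Set.range f}.ncard :=
    Set.ncard_le_ncard fun f hf => ⟨hf.2, hf.1.2⟩
  rw [monoSet_cloneColoring_diff] at hψ
  omega

theorem ncard_inter_mem_range_le_of_forall_le [Fintype α] [Fintype V] {χ : Sym2 V → Fin 2}
    (hmin : ∀ ψ : Sym2 V → Fin 2, (monoSet F χ).ncard ≤ (monoSet F ψ).ncard) (u v : V) :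
    (monoSet F χ ∩ {f | v ∈ Set.range f}).ncard ≤
      (monoSet F χ ∩ {f | u ∈ Set.range f}).ncard +
        Fintype.card α * (Fintype.card α - 1) * Fintype.card V ^ (Fintype.card α - 2) := by
  rcases eq_or_ne u v with rfl | huv
  · exact Nat.le_add_right _ _
  have := ncard_monoSet_cloneColoring_add_le F χ u v
  have := ncard_mem_range_and_mem_range_le (α := α) huv
  have := hmin (cloneColoring χ u v)
  omega

theorem card_mul_ncard_inter_mem_range_le_of_forall_le [Fintype α] [Fintype V]
    {χ : Sym2 V → Fin 2}
    (hmin : ∀ ψ : Sym2 V → Fin 2, (monoSet F χ).ncard ≤ (monoSet F ψ).ncard) (v : V) :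
    let g := fun u => (monoSet F χ ∩ {f | u ∈ Set.range f}).ncard
    let E := Fintype.card α * (Fintype.card α - 1) * Fintype.card V ^ (Fintype.card α - 2)
    Fintype.card V * g v ≤ Fintype.card α * (monoSet F χ).ncard + Fintype.card V * E ∧
      Fintype.card α * (monoSet F χ).ncard ≤ Fintype.card V * g v + Fintype.card V * E := by
  intro g E
  have hsum : ∑ u, g u = Fintype.card α * (monoSet F χ).ncard :=
    sum_ncard_inter_mem_range fun _ hf => hf.1
  constructor
  · calc Fintype.card V * g v = ∑ _u : V, g v := by simp
      _ ≤ ∑ u, (g u + E) :=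
        sum_le_sum fun u _ => ncard_inter_mem_range_le_of_forall_le F hmin u v
      _ = _ := by simp [sum_add_distrib, hsum]
  · calc Fintype.card α * (monoSet F χ).ncard = ∑ u, g u := hsum.symm
      _ ≤ ∑ _u : V, (g v + E) :=
        sum_le_sum fun u _ => ncard_inter_mem_range_le_of_forall_le F hmin v u
      _ = _ := by simp [mul_add]

end Clone

theorem pow_le_two_pow_mul_factorial_mul_choose {n k : ℕ} (h : 2 * k ≤ n) :
    n ^ k ≤ 2 ^ k * k.factorial * n.choose k :=
  calc n ^ k ≤ (2 * (n + 1 - k)) ^ k := Nat.pow_le_pow_left (by omega) k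
    _ = 2 ^ k * (n + 1 - k) ^ k := mul_pow _ _ _
    _ ≤ 2 ^ k * n.descFactorial k := Nat.mul_le_mul_left _ (n.pow_sub_le_descFactorial k)
    _ = 2 ^ k * k.factorial * n.choose k := by
      rw [Nat.descFactorial_eq_factorial_mul_choose, mul_assoc]

theorem exists_pow_le_mul_ncard_monoSet {α : Type*} [Fintype α] (F : SimpleGraph α) :
    ∃ K : ℕ, ∀ (V : Type u) [Fintype V] (χ : Sym2 V → Fin 2), 0 < (monoSet F χ).ncard →
      Fintype.card V ^ Fintype.card α ≤ K * (monoSet F χ).ncard := by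
  set k := Fintype.card α
  set N₀ := max k.centralBinom (2 * k)
  refine ⟨2 ^ k * k.factorial * k.centralBinom.choose k + N₀ ^ k, fun V _ χ hm => ?_⟩
  rcases le_or_gt N₀ (Fintype.card V) with hV | hV
  · calc Fintype.card V ^ k ≤ 2 ^ k * k.factorial * (Fintype.card V).choose k :=
          pow_le_two_pow_mul_factorial_mul_choose (le_of_max_le_right hV)
      _ ≤ 2 ^ k * k.factorial * (k.centralBinom.choose k * (monoSet F χ).ncard) :=
          Nat.mul_le_mul_left _
            (choose_le_choose_centralBinom_mul_ncard_monoSet F χ (le_of_max_le_left hV))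
      _ ≤ _ := by rw [← mul_assoc, add_mul]; exact Nat.le_add_right _ _
  · calc Fintype.card V ^ k ≤ N₀ ^ k := Nat.pow_le_pow_left hV.le k
      _ ≤ N₀ ^ k * (monoSet F χ).ncard := Nat.le_mul_of_pos_right _ hm
      _ ≤ _ := Nat.mul_le_mul_right _ (Nat.le_add_left _ _)

theorem mul_mul_le_of_pow_le {n k K m : ℕ} (h : n ^ k ≤ K * m) :
    n * n * (k * (k - 1) * n ^ (k - 2)) ≤ ((k - 1) * K + 1) * (k * m) := by
  rcases lt_or_ge k 2 with hk | hk
  · interval_cases k <;> simp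
  have hpow : n * n * n ^ (k - 2) = n ^ k := by
    rw [← sq, ← pow_add]; congr 1; omega
  calc n * n * (k * (k - 1) * n ^ (k - 2)) = k * (k - 1) * n ^ k := by rw [← hpow]; ring
    _ ≤ k * (k - 1) * (K * m) := Nat.mul_le_mul_left _ h
    _ ≤ ((k - 1) * K + 1) * (k * m) := by nlinarith

theorem bounds_of_mul_le {n t m mv E C : ℝ} (hn : 0 < n) (hupper : n * mv ≤ t * m + n * E)
    (hlower : t * m ≤ n * mv + n * E) (hE : n * n * E ≤ C * (t * m)) :
    (1 - C / n) * (t / n) * m ≤ mv ∧ mv ≤ (1 + C / n) * (t / n) * m := by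
  have hnn : 0 < n * n := mul_pos hn hn
  constructor
  · rw [show (1 - C / n) * (t / n) * m = (n * (t * m) - C * (t * m)) / (n * n) by field_simp,
      div_le_iff₀ hnn]
    nlinarith [mul_le_mul_of_nonneg_left hlower hn.le]
  · rw [show (1 + C / n) * (t / n) * m = (n * (t * m) + C * (t * m)) / (n * n) by field_simp,
      le_div_iff₀ hnn]
    nlinarith [mul_le_mul_of_nonneg_left hupper hn.le]

theorem monoCopies_eq_ncard_monoSet {α : Type*} [Fintype α] (F : SimpleGraph α) {n : ℕ}
    (χ : Sym2 (Fin n) → Fin 2) : monoCopies F χ = (monoSet F χ).ncard := rfl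

theorem monoCopiesVia_eq_ncard_monoSet_inter {α : Type*} [Fintype α] (F : SimpleGraph α)
    {n : ℕ} (χ : Sym2 (Fin n) → Fin 2) (v : Fin n) :
    monoCopiesVia F χ v = (monoSet F χ ∩ {f | v ∈ Set.range f}).ncard := by
  unfold monoCopiesVia monoSet
  congr 1
  ext f
  exact ⟨fun ⟨hf, hv, hcol⟩ => ⟨⟨hf, hcol⟩, hv⟩,
    fun ⟨⟨hf, hcol⟩, hv⟩ => ⟨hf, hv, hcol⟩⟩

theorem statement5 (t : ℕ) (H : SimpleGraph (Fin t)) :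
    ∃ C : ℝ, 0 < C ∧ ∀ (n : ℕ) (χ : Sym2 (Fin n) → Fin 2),
      monoCopies H χ = minMono H n 2 → ∀ v : Fin n,
        (1 - C / n) * ((t : ℝ) / n) * (minMono H n 2 : ℝ) ≤ (monoCopiesVia H χ v : ℝ) ∧
        (monoCopiesVia H χ v : ℝ) ≤ (1 + C / n) * ((t : ℝ) / n) * (minMono H n 2 : ℝ) := by
  obtain ⟨K, hK⟩ := exists_pow_le_mul_ncard_monoSet H
  refine ⟨((t - 1) * K + 1 : ℕ), by positivity, fun n χ hχ v => ?_⟩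
  have hmin : ∀ ψ : Sym2 (Fin n) → Fin 2, (monoSet H χ).ncard ≤ (monoSet H ψ).ncard :=
    fun ψ => hχ.trans_le (ciInf_le (OrderBot.bddBelow _) ψ)
  rw [← hχ, monoCopiesVia_eq_ncard_monoSet_inter, monoCopies_eq_ncard_monoSet]
  rcases Nat.eq_zero_or_pos (monoSet H χ).ncard with hm | hm
  · have hmv : (monoSet H χ ∩ {f | v ∈ Set.range f}).ncard = 0 :=
      Nat.eq_zero_of_le_zero (hm ▸ Set.ncard_le_ncard Set.inter_subset_left)
    rw [hm, hmv]
    simp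
  obtain ⟨hupper, hlower⟩ := card_mul_ncard_inter_mem_range_le_of_forall_le H hmin v
  have hE := mul_mul_le_of_pow_le (hK (Fin n) χ hm)
  simp only [Fintype.card_fin] at hupper hlower hE
  exact bounds_of_mul_le (E := (t * (t - 1) * n ^ (t - 2) : ℕ)) (by exact_mod_cast v.pos)
    (by exact_mod_cast hupper) (by exact_mod_cast hlower) (by exact_mod_cast hE)
end

section
/- Let H_1 and H_2 be graphs on h_1 and h_2 vertices respectively, with h_1, h_2 ≤ h. For any n ≥ 4^h, any 2-coloring of E(K_n) contains at least 4^{−h²}·(n)_{h_1} red labeled copies of H_1 or at least 4^{−h²}·(n)_{h_2} blue labeled copies of H_2. -/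
open Filter

/-!
Write `x = #S + 1` and `P_a(x) = ∏_{i<a} (x - 2^i)`. The two colour-neighbourhoods of a vertex
of `S` partition the other vertices, so for one colour, say red, at least half of the vertices `v`
have a red neighbourhood `N(v)` with `#N(v) + 1 ≥ x / 2`. Induct on `a + b`: if one of these
`N(v)` contains many blue `K_b`, so does `S`; otherwise each contains many red `K_{a-1}`, and
prefixing `v` yields many red `K_a` in `S`. Since `P_{a+1}(x) = (x - 1) 2^a P_a(x / 2)`, the halving
costs a factor `2^(a+b)` per step, hence `2^(choose (a+b) 2)` in total, and `(n)_a ≤ 2^a P_a(n+1)`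
costs one more `2^a`; for `a, b ≤ h` the total is at most `4^(h^2)`.
-/

open Finset Function

noncomputable def dyadicDescFactorial (a : ℕ) (x : ℝ) : ℝ := ∏ i ∈ range a, (x - 2 ^ i)

section dyadicDescFactorial

variable {a : ℕ} {x y : ℝ}

lemma dyadicDescFactorial_succ (a : ℕ) (x : ℝ) :
    dyadicDescFactorial (a + 1) x = dyadicDescFactorial a x * (x - 2 ^ a) :=
  prod_range_succ _ _

lemma dyadicDescFactorial_succ_eq_mul_half (a : ℕ) (x : ℝ) :
    dyadicDescFactorial (a + 1) x = (x - 1) * 2 ^ a * dyadicDescFactorial a (x / 2) := by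
  have hhalf (i : ℕ) : x - 2 ^ (i + 1) = 2 * (x / 2 - 2 ^ i) := by ring
  simp only [dyadicDescFactorial, prod_range_succ', hhalf, prod_mul_distrib, prod_const,
    card_range]
  ring

lemma dyadicDescFactorial_nonneg (hx : 2 ^ a ≤ x) : 0 ≤ dyadicDescFactorial a x :=
  prod_nonneg fun _ hi =>
    sub_nonneg.2 <| (pow_le_pow_right₀ one_le_two (mem_range.1 hi).le).trans hx

lemma dyadicDescFactorial_le_of_le (hx : 2 ^ a ≤ x) (hxy : x ≤ y) :
    dyadicDescFactorial a x ≤ dyadicDescFactorial a y :=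
  prod_le_prod
    (fun _ hi => sub_nonneg.2 <| (pow_le_pow_right₀ one_le_two (mem_range.1 hi).le).trans hx)
    fun _ _ => by linarith

lemma dyadicDescFactorial_le_two_pow_mul_half (hx : 2 ^ (a + 1) ≤ x) :
    dyadicDescFactorial a x ≤ 2 ^ (a + 1) * dyadicDescFactorial a (x / 2) := by
  have hpow : (2 : ℝ) ^ (a + 1) = 2 * 2 ^ a := pow_succ' 2 a
  have hone : (1 : ℝ) ≤ 2 ^ a := one_le_pow₀ one_le_two
  have hnonneg : 0 ≤ dyadicDescFactorial a x := dyadicDescFactorial_nonneg (by linarith)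
  have hrec : dyadicDescFactorial a x * (x - 2 ^ a) =
      (x - 1) * 2 ^ a * dyadicDescFactorial a (x / 2) := by
    rw [← dyadicDescFactorial_succ, dyadicDescFactorial_succ_eq_mul_half]
  have hmul : dyadicDescFactorial a x * (x - 1) ≤
      2 ^ (a + 1) * dyadicDescFactorial a (x / 2) * (x - 1) :=
    calc dyadicDescFactorial a x * (x - 1)
        ≤ dyadicDescFactorial a x * (2 * (x - 2 ^ a)) := by gcongr; linarith
      _ = 2 ^ (a + 1) * dyadicDescFactorial a (x / 2) * (x - 1) := by
        rw [hpow, mul_left_comm, hrec]; ring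
  exact le_of_mul_le_mul_right hmul (by linarith)

end dyadicDescFactorial

lemma descFactorial_le_two_pow_mul_dyadicDescFactorial {n a : ℕ} (h : 2 ^ a ≤ n + 1) :
    (n.descFactorial a : ℝ) ≤ 2 ^ a * dyadicDescFactorial a (n + 1) := by
  rw [Nat.descFactorial_eq_prod_range, Nat.cast_prod, dyadicDescFactorial,
    show (2 : ℝ) ^ a = ∏ _i ∈ range a, 2 by simp, ← prod_mul_distrib]
  refine prod_le_prod (fun _ _ => Nat.cast_nonneg _) fun i hi => ?_
  have hi : 2 ^ (i + 1) ≤ n + 1 := (Nat.pow_le_pow_right two_pos (mem_range.1 hi)).trans h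
  have hin : i ≤ n := by have := Nat.lt_two_pow_self (n := i + 1); omega
  have hi' : (2 : ℝ) ^ i * 2 ≤ n + 1 := by rw [← pow_succ]; exact_mod_cast hi
  rw [Nat.cast_sub hin]
  linarith [(Nat.cast_nonneg i : (0 : ℝ) ≤ i)]

namespace SimpleGraph

variable {V : Type*} (G : SimpleGraph V)

open scoped Classical in
noncomputable def labeledCliques (a : ℕ) (s : Finset V) : Finset (Fin a → V) :=
  (Fintype.piFinset fun _ => s).filter fun f => Pairwise (G.Adj on f)

open scoped Classical in
noncomputable def neighborsIn (s : Finset V) (v : V) : Finset V := s.filter (G.Adj v)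

variable {G} {a : ℕ} {s t : Finset V}

lemma mem_labeledCliques {f : Fin a → V} :
    f ∈ G.labeledCliques a s ↔ (∀ i, f i ∈ s) ∧ Pairwise (G.Adj on f) := by
  simp [labeledCliques]

lemma mem_neighborsIn {v w : V} : w ∈ G.neighborsIn s v ↔ w ∈ s ∧ G.Adj v w := by
  simp [neighborsIn]

lemma neighborsIn_subset (v : V) : G.neighborsIn s v ⊆ s :=
  fun _ hw => (mem_neighborsIn.1 hw).1

lemma labeledCliques_mono (h : s ⊆ t) : G.labeledCliques a s ⊆ G.labeledCliques a t := by
  intro f hf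
  rw [mem_labeledCliques] at hf ⊢
  exact ⟨fun i => h (hf.1 i), hf.2⟩

lemma card_labeledCliques_of_le_one (ha : a ≤ 1) : #(G.labeledCliques a s) = #s ^ a := by
  classical
  have := Fin.subsingleton_iff_le_one.2 ha
  rw [labeledCliques, filter_true_of_mem fun f _ => Subsingleton.pairwise, Fintype.card_piFinset,
    prod_const, card_univ, Fintype.card_fin]

lemma fin_cons_mem_labeledCliques {v : V} {f : Fin a → V} (hv : v ∈ s)
    (hf : f ∈ G.labeledCliques a (G.neighborsIn s v)) :
    (Fin.cons v f : Fin (a + 1) → V) ∈ G.labeledCliques (a + 1) s := by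
  simp only [mem_labeledCliques, mem_neighborsIn] at hf ⊢
  obtain ⟨hfs, hfG⟩ := hf
  refine ⟨Fin.cases hv fun i => (hfs i).1, ?_⟩
  intro i j hij
  cases i using Fin.cases <;> cases j using Fin.cases
  · exact absurd rfl hij
  · exact (hfs _).2
  · exact ((hfs _).2).symm
  · exact hfG fun h => hij (congrArg _ h)

lemma sum_card_labeledCliques_neighborsIn_le {T : Finset V} (hT : T ⊆ s) :
    ∑ v ∈ T, #(G.labeledCliques a (G.neighborsIn s v)) ≤ #(G.labeledCliques (a + 1) s) := by
  rw [← card_sigma]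
  refine card_le_card_of_injOn (fun p => Fin.cons p.1 p.2) (fun p hp => ?_) fun p _ q _ hpq => ?_
  · rw [mem_coe, mem_sigma] at hp
    exact fin_cons_mem_labeledCliques (hT hp.1) hp.2
  · obtain ⟨h1, h2⟩ := Fin.cons_injective2 hpq
    exact Sigma.ext h1 (heq_of_eq h2)

variable (G) in
def CliqueDichotomy (a b : ℕ) (s : Finset V) : Prop :=
  dyadicDescFactorial a (#s + 1) ≤ 2 ^ (a + b).choose 2 * #(G.labeledCliques a s) ∨
    dyadicDescFactorial b (#s + 1) ≤ 2 ^ (a + b).choose 2 * #(Gᶜ.labeledCliques b s)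

lemma cliqueDichotomy_compl_iff {b : ℕ} :
    Gᶜ.CliqueDichotomy b a s ↔ G.CliqueDichotomy a b s := by
  rw [CliqueDichotomy, CliqueDichotomy, compl_compl, or_comm, Nat.add_comm b a]

lemma cliqueDichotomy_of_le_one {b : ℕ} (ha : a ≤ 1) : G.CliqueDichotomy a b s := by
  have hbound : dyadicDescFactorial a (#s + 1) = #s ^ a := by
    interval_cases a <;> simp [dyadicDescFactorial]
  left
  rw [hbound, card_labeledCliques_of_le_one ha, Nat.cast_pow]
  exact le_mul_of_one_le_left (by positivity) (one_le_pow₀ one_le_two)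

lemma card_le_card_neighborsIn_add_card_compl {v : V} (hv : v ∈ s) :
    #s ≤ #(G.neighborsIn s v) + #(Gᶜ.neighborsIn s v) + 1 := by
  classical
  have hsplit : s.erase v ⊆ G.neighborsIn s v ∪ Gᶜ.neighborsIn s v := by
    intro w hw
    obtain ⟨hwv, hws⟩ := mem_erase.1 hw
    simp only [mem_union, mem_neighborsIn, compl_adj]
    tauto
  have := (card_le_card hsplit).trans (card_union_le _ _)
  rw [card_erase_of_mem hv] at this
  omega

lemma le_two_mul_card_filter_or_compl (s : Finset V) :
    #s ≤ 2 * #(s.filter fun v => #s ≤ 2 * #(G.neighborsIn s v) + 1) ∨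
      #s ≤ 2 * #(s.filter fun v => #s ≤ 2 * #(Gᶜ.neighborsIn s v) + 1) := by
  classical
  have hcover : s ⊆ (s.filter fun v => #s ≤ 2 * #(G.neighborsIn s v) + 1) ∪
      (s.filter fun v => #s ≤ 2 * #(Gᶜ.neighborsIn s v) + 1) := by
    intro v hv
    have := card_le_card_neighborsIn_add_card_compl (G := G) hv
    simp only [mem_union, mem_filter, hv, true_and]
    omega
  have := (card_le_card hcover).trans (card_union_le _ _)
  omega

lemma dyadicDescFactorial_le_of_subset {e : ℕ} (hts : t ⊆ s) (hst : #s + 1 ≤ 2 * (#t + 1))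
    (hs : 2 ^ (a + 1) ≤ #s + 1)
    (ht : dyadicDescFactorial a (#t + 1) ≤ 2 ^ e * #(G.labeledCliques a t)) :
    dyadicDescFactorial a (#s + 1) ≤ 2 ^ (e + a + 1) * #(G.labeledCliques a s) := by
  have hs' : (2 : ℝ) ^ (a + 1) ≤ #s + 1 := by exact_mod_cast hs
  have hst' : ((#s : ℝ) + 1) / 2 ≤ #t + 1 := by
    rw [div_le_iff₀ two_pos]; exact_mod_cast (by omega : #s + 1 ≤ (#t + 1) * 2)
  have hhalf : (2 : ℝ) ^ a ≤ (#s + 1) / 2 := by rw [pow_succ] at hs'; linarith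
  have hcard : (#(G.labeledCliques a t) : ℝ) ≤ #(G.labeledCliques a s) := by
    exact_mod_cast card_le_card (labeledCliques_mono hts)
  calc dyadicDescFactorial a (#s + 1)
      ≤ 2 ^ (a + 1) * dyadicDescFactorial a ((#s + 1) / 2) :=
        dyadicDescFactorial_le_two_pow_mul_half hs'
    _ ≤ 2 ^ (a + 1) * dyadicDescFactorial a (#t + 1) := by
        gcongr; exact dyadicDescFactorial_le_of_le hhalf hst'
    _ ≤ 2 ^ (a + 1) * (2 ^ e * #(G.labeledCliques a s)) := by gcongr; exact ht.trans (by gcongr)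
    _ = 2 ^ (e + a + 1) * #(G.labeledCliques a s) := by ring

lemma dyadicDescFactorial_succ_le_of_neighborsIn {e : ℕ} {T : Finset V} (hTs : T ⊆ s)
    (hT : #s ≤ 2 * #T) (hs : 2 ^ (a + 1) ≤ #s + 1)
    (hN : ∀ v ∈ T, #s ≤ 2 * #(G.neighborsIn s v) + 1)
    (hcl : ∀ v ∈ T, dyadicDescFactorial a (#(G.neighborsIn s v) + 1) ≤
      2 ^ e * #(G.labeledCliques a (G.neighborsIn s v))) :
    dyadicDescFactorial (a + 1) (#s + 1) ≤ 2 ^ (e + a + 1) * #(G.labeledCliques (a + 1) s) := by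
  have hs' : (2 : ℝ) ^ (a + 1) ≤ #s + 1 := by exact_mod_cast hs
  have hhalf : (2 : ℝ) ^ a ≤ (#s + 1) / 2 := by rw [pow_succ] at hs'; linarith
  have hT' : (#s : ℝ) ≤ 2 * #T := by exact_mod_cast hT
  have hsum : (∑ v ∈ T, #(G.labeledCliques a (G.neighborsIn s v)) : ℝ) ≤
      #(G.labeledCliques (a + 1) s) := by
    exact_mod_cast sum_card_labeledCliques_neighborsIn_le hTs
  have hbound (v : V) (hv : v ∈ T) : dyadicDescFactorial a ((#s + 1) / 2) ≤
      2 ^ e * #(G.labeledCliques a (G.neighborsIn s v)) := by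
    refine (dyadicDescFactorial_le_of_le hhalf ?_).trans (hcl v hv)
    rw [div_le_iff₀ two_pos]; exact_mod_cast (by have := hN v hv; omega :
      #s + 1 ≤ (#(G.neighborsIn s v) + 1) * 2)
  have hnonneg := dyadicDescFactorial_nonneg hhalf
  calc dyadicDescFactorial (a + 1) (#s + 1)
      = #s * 2 ^ a * dyadicDescFactorial a ((#s + 1) / 2) := by
        rw [dyadicDescFactorial_succ_eq_mul_half, add_sub_cancel_right]
    _ ≤ 2 * #T * 2 ^ a * dyadicDescFactorial a ((#s + 1) / 2) := by gcongr
    _ = 2 ^ (a + 1) * ∑ _v ∈ T, dyadicDescFactorial a ((#s + 1) / 2) := by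
        rw [sum_const, nsmul_eq_mul]; ring
    _ ≤ 2 ^ (a + 1) * ∑ v ∈ T, 2 ^ e * (#(G.labeledCliques a (G.neighborsIn s v)) : ℝ) := by
        gcongr with v hv; exact hbound v hv
    _ = 2 ^ (e + a + 1) * ∑ v ∈ T, (#(G.labeledCliques a (G.neighborsIn s v)) : ℝ) := by
        rw [← mul_sum]; ring
    _ ≤ 2 ^ (e + a + 1) * #(G.labeledCliques (a + 1) s) := by gcongr

lemma cliqueDichotomy_succ_left {b : ℕ} (ha : 1 ≤ a) (hb : 1 ≤ b)
    (hs : 2 ^ (a + 1 + b) ≤ #s + 1)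
    (hT : #s ≤ 2 * #(s.filter fun v => #s ≤ 2 * #(G.neighborsIn s v) + 1))
    (IH : ∀ t : Finset V, 2 ^ (a + b) ≤ #t + 1 → G.CliqueDichotomy a b t) :
    G.CliqueDichotomy (a + 1) b s := by
  set T := s.filter fun v => #s ≤ 2 * #(G.neighborsIn s v) + 1
  set e := (a + b).choose 2
  have hchoose : (a + 1 + b).choose 2 = e + (a + b) := by
    rw [Nat.add_right_comm, Nat.choose_succ_succ', Nat.choose_one_right, add_comm]
  have hpow : 2 ^ (a + 1 + b) = 2 * 2 ^ (a + b) := by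
    rw [Nat.add_right_comm, pow_succ']
  have hNT (v : V) (hv : v ∈ T) : #s ≤ 2 * #(G.neighborsIn s v) + 1 := (mem_filter.1 hv).2
  have hIH (v : V) (hv : v ∈ T) : G.CliqueDichotomy a b (G.neighborsIn s v) :=
    IH _ (by have := hNT v hv; omega)
  have hexp (d : ℕ) (hd : d ≤ a + b) (N : ℝ) (hN : 0 ≤ N) :
      2 ^ (e + d) * N ≤ 2 ^ (a + 1 + b).choose 2 * N := by
    rw [hchoose]; gcongr; exact one_le_two
  by_cases hcompl : ∃ v ∈ T, dyadicDescFactorial b (#(G.neighborsIn s v) + 1) ≤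
      2 ^ e * #(Gᶜ.labeledCliques b (G.neighborsIn s v))
  · obtain ⟨v, hvT, hv⟩ := hcompl
    have hpow' : 2 ^ (b + 1) ≤ 2 ^ (a + 1 + b) := Nat.pow_le_pow_right two_pos (by omega)
    right
    refine (dyadicDescFactorial_le_of_subset (neighborsIn_subset v) ?_ ?_ hv).trans ?_
    · have := hNT v hvT; omega
    · omega
    · exact hexp (b + 1) (by omega) _ (Nat.cast_nonneg _)
  · push Not at hcompl
    have hpow' : 2 ^ (a + 1) ≤ 2 ^ (a + 1 + b) := Nat.pow_le_pow_right two_pos (by omega)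
    left
    refine (dyadicDescFactorial_succ_le_of_neighborsIn (filter_subset _ s) hT (by omega) hNT
      fun v hv => (hIH v hv).resolve_right (hcompl v hv).not_ge).trans ?_
    exact hexp (a + 1) (by omega) _ (Nat.cast_nonneg _)

theorem cliqueDichotomy_of_two_pow_le (G : SimpleGraph V) (a b : ℕ) (s : Finset V)
    (hs : 2 ^ (a + b) ≤ #s + 1) : G.CliqueDichotomy a b s := by
  rcases le_or_gt a 1 with ha | ha
  · exact cliqueDichotomy_of_le_one ha
  rcases le_or_gt b 1 with hb | hb
  · exact cliqueDichotomy_compl_iff.1 (cliqueDichotomy_of_le_one hb)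
  obtain ⟨a, rfl⟩ : ∃ a', a = a' + 1 := ⟨a - 1, by omega⟩
  obtain ⟨b, rfl⟩ : ∃ b', b = b' + 1 := ⟨b - 1, by omega⟩
  rcases G.le_two_mul_card_filter_or_compl s with hT | hT
  · exact cliqueDichotomy_succ_left (by omega) (by omega) hs hT fun t ht =>
      cliqueDichotomy_of_two_pow_le G a (b + 1) t ht
  · refine cliqueDichotomy_compl_iff.1 (cliqueDichotomy_succ_left (by omega) (by omega)
      (by rwa [Nat.add_comm (b + 1)]) hT fun t ht => ?_)
    exact cliqueDichotomy_of_two_pow_le Gᶜ b (a + 1) t ht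
termination_by a + b

end SimpleGraph

lemma card_labeledCliques_univ_le_colorCopies {n a c : ℕ} (χ : Sym2 (Fin n) → Fin c)
    (col : Fin c) (H : SimpleGraph (Fin a)) (G : SimpleGraph (Fin n))
    (hG : ∀ v w, G.Adj v w → χ s(v, w) = col) :
    #(G.labeledCliques a univ) ≤ colorCopies H χ col := by
  rw [colorCopies, colorCopiesIn, ← Set.ncard_coe_finset]
  refine Set.ncard_le_ncard (fun f hf => ?_) (Set.toFinite _)
  obtain ⟨-, hclique⟩ := SimpleGraph.mem_labeledCliques.1 hf
  exact ⟨Function.injective_iff_pairwise_ne.2 fun i j hij => (hclique hij).ne,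
    fun _ => Set.mem_univ _, fun v w hvw => hG _ _ (hclique hvw.ne)⟩

lemma SimpleGraph.compl_fromEdgeSet_adj_eq_one {V : Type*} (χ : Sym2 V → Fin 2) {v w : V}
    (h : (fromEdgeSet {e | χ e = 0})ᶜ.Adj v w) : χ s(v, w) = 1 := by
  rw [compl_adj, fromEdgeSet_adj] at h
  exact Fin.eq_one_of_ne_zero _ fun h0 => h.2 ⟨h0, h.1⟩

lemma choose_two_mul_two_add (h : ℕ) : (2 * h).choose 2 + h = 2 * h ^ 2 := by
  induction h with
  | zero => rfl
  | succ h ih =>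
    rw [show 2 * (h + 1) = 2 * h + 1 + 1 by ring, Nat.choose_succ_succ' (2 * h + 1) 1,
      Nat.choose_succ_succ' (2 * h) 1, Nat.choose_one_right, Nat.choose_one_right]
    nlinarith

lemma four_pow_neg_sq_mul_descFactorial_le {h n a e N : ℕ} (hn : 2 ^ a ≤ n + 1)
    (he : a + e ≤ 2 * h ^ 2) (hN : dyadicDescFactorial a (n + 1) ≤ 2 ^ e * N) :
    (4 : ℝ) ^ (-(h ^ 2 : ℤ)) * (n.descFactorial a : ℝ) ≤ N := by
  rw [zpow_neg, ← Nat.cast_pow, zpow_natCast, inv_mul_le_iff₀ (by positivity)]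
  calc (n.descFactorial a : ℝ)
      ≤ 2 ^ a * dyadicDescFactorial a (n + 1) :=
        descFactorial_le_two_pow_mul_dyadicDescFactorial hn
    _ ≤ 2 ^ (a + e) * N := by rw [pow_add, mul_assoc]; gcongr
    _ ≤ 4 ^ (h ^ 2) * N := by
        rw [show (4 : ℝ) = 2 ^ 2 by norm_num, ← pow_mul]
        gcongr
        exact one_le_two

theorem statement6 (h h1 h2 : ℕ) (hh1 : h1 ≤ h) (hh2 : h2 ≤ h)
    (H1 : SimpleGraph (Fin h1)) (H2 : SimpleGraph (Fin h2))
    (n : ℕ) (hn : 4 ^ h ≤ n) (χ : Sym2 (Fin n) → Fin 2) :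
    (4 : ℝ) ^ (-(h ^ 2 : ℤ)) * (n.descFactorial h1 : ℝ) ≤ (colorCopies H1 χ 0 : ℝ) ∨
    (4 : ℝ) ^ (-(h ^ 2 : ℤ)) * (n.descFactorial h2 : ℝ) ≤ (colorCopies H2 χ 1 : ℝ) := by
  set G := SimpleGraph.fromEdgeSet {e : Sym2 (Fin n) | χ e = 0}
  have hlarge (d : ℕ) (hd : d ≤ 2 * h) : 2 ^ d ≤ n + 1 :=
    (Nat.pow_le_pow_right two_pos hd).trans (by rw [pow_mul]; norm_num; omega)
  have hexp (a : ℕ) (ha : a ≤ h) : a + (h1 + h2).choose 2 ≤ 2 * h ^ 2 := by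
    have := Nat.choose_le_choose 2 (by omega : h1 + h2 ≤ 2 * h)
    have := choose_two_mul_two_add h
    omega
  have hdich := G.cliqueDichotomy_of_two_pow_le h1 h2 univ (by simpa using hlarge _ (by omega))
  simp only [SimpleGraph.CliqueDichotomy, card_univ, Fintype.card_fin] at hdich
  refine hdich.imp
    (fun hred => four_pow_neg_sq_mul_descFactorial_le (hlarge h1 (by omega)) (hexp h1 hh1)
      (hred.trans ?_))
    (fun hblue => four_pow_neg_sq_mul_descFactorial_le (hlarge h2 (by omega)) (hexp h2 hh2)
      (hblue.trans ?_))
  · gcongr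
    exact card_labeledCliques_univ_le_colorCopies χ 0 H1 G fun v w hvw =>
      ((SimpleGraph.fromEdgeSet_adj _).1 hvw).1
  · gcongr
    exact card_labeledCliques_univ_le_colorCopies χ 1 H2 Gᶜ fun v w =>
      SimpleGraph.compl_fromEdgeSet_adj_eq_one χ
end

section
/- Let k ≥ 2 and let ε > 0 satisfy √(2ε) ≤ 1/(k−1) − 1/k. Let G be a graph on n vertices with minimum degree at least (1 − 1/(k−1) − ε)n, and let V_1 ⊔ ⋯ ⊔ V_{k−1} be a partition of the vertex set of G such that the total number of edges of G inside the parts V_1, …, V_{k−1} is at most ε·n²/2. Then: (i) for each 1 ≤ i ≤ k−1, n/(k−1) − √(2ε)·n ≤ |V_i| ≤ n/(k−1) + √(2ε)·n; and (ii) for each 1 ≤ i ≠ j ≤ k−1, the number of edges of G between V_i and V_j is at least (1 − k²ε)·|V_i|·|V_j|. -/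
open Filter

/-!
For a vertex set `A`, every `v ∈ A` has at most `n - |A|` neighbours outside `A`, so the
minimum degree condition gives `|A|² ≤ 2e(A) + (1/(k-1) + ε) n |A|`. Summing the slack of this
inequality over the parts, together with the deviations `(|V_l| - n/(k-1))²`, gives exactly
`Σ 2e(V_l) + εn² ≤ 2εn²`; this yields (i). Applying the inequality to `V_i ∪ V_j` and absorbing
the slacks of `V_i` and `V_j` gives
`2e(V_i, V_j) ≥ 2|V_i||V_j| + (|V_i| - n/(k-1))² + (|V_j| - n/(k-1))² - 2εn²`,
and completing the square shows that the last three terms are at least `-2k²ε|V_i||V_j|`.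
-/

open Finset

namespace SimpleGraph

variable {V : Type*} (G : SimpleGraph V) [DecidableRel G.Adj]

theorem two_mul_ncard_edges_within_eq_card_interedges [Fintype V] (A : Finset V) :
    2 * Set.ncard {e ∈ G.edgeSet | ∀ v ∈ e, v ∈ A} = #(G.interedges A A) := by
  classical
  let H : SimpleGraph V := fromEdgeSet {e ∈ G.edgeSet | ∀ v ∈ e, v ∈ A}
  have hH : H.edgeSet = {e ∈ G.edgeSet | ∀ v ∈ e, v ∈ A} := by
    rw [edgeSet_fromEdgeSet, sdiff_eq_left]
    exact Set.disjoint_left.2 fun e he => G.not_isDiag_of_mem_edgeSet he.1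
  rw [← hH, ← coe_edgeFinset, Set.ncard_coe_finset]
  convert H.two_mul_card_edgeFinset using 3
  · ext; simp only [mem_edgeFinset]
  ext ⟨v, w⟩
  simp only [mk_mem_interedges_iff, mem_filter, mem_univ, true_and, H, fromEdgeSet_adj,
    Set.mem_ofPred_eq, mem_edgeSet, Sym2.mem_iff]
  constructor
  · rintro ⟨hv, hw, hadj⟩
    refine ⟨⟨hadj, ?_⟩, hadj.ne⟩
    rintro u (rfl | rfl) <;> assumption
  · rintro ⟨⟨hadj, hA⟩, -⟩
    exact ⟨hA v (Or.inl rfl), hA w (Or.inr rfl), hadj⟩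

theorem ncard_edges_between_eq_card_interedges {A B : Finset V} (hAB : Disjoint A B) :
    Set.ncard {e ∈ G.edgeSet | ∃ a ∈ A, ∃ b ∈ B, e = s(a, b)} = #(G.interedges A B) := by
  classical
  have himage : {e ∈ G.edgeSet | ∃ a ∈ A, ∃ b ∈ B, e = s(a, b)} =
      ((G.interedges A B).image fun p => s(p.1, p.2) : Set (Sym2 V)) := by
    ext e
    simp only [Set.mem_ofPred_eq, coe_image, Set.mem_image, mem_coe, Prod.exists,
      mk_mem_interedges_iff]
    constructor
    · rintro ⟨he, a, ha, b, hb, rfl⟩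
      exact ⟨a, b, ⟨ha, hb, he⟩, rfl⟩
    · rintro ⟨a, b, ⟨ha, hb, hadj⟩, rfl⟩
      exact ⟨hadj, a, ha, b, hb, rfl⟩
  rw [himage, Set.ncard_coe_finset, card_image_of_injOn]
  rintro ⟨a, b⟩ hab ⟨a', b'⟩ hab' h
  simp only [mem_coe, mk_mem_interedges_iff] at hab hab' h
  rcases Sym2.eq_iff.1 h with ⟨rfl, rfl⟩ | ⟨rfl, -⟩
  · rfl
  · exact absurd hab'.2.1 (Finset.disjoint_left.1 hAB hab.1)

variable [DecidableEq V] {A B : Finset V}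

theorem card_interedges_union_left (hAB : Disjoint A B) (C : Finset V) :
    #(G.interedges (A ∪ B) C) = #(G.interedges A C) + #(G.interedges B C) := by
  rw [← card_union_of_disjoint (G.interedges_disjoint_left hAB C)]
  congr 1
  ext ⟨v, w⟩
  simp only [mk_mem_interedges_iff, mem_union]
  tauto

theorem card_interedges_union_right (C : Finset V) (hAB : Disjoint A B) :
    #(G.interedges C (A ∪ B)) = #(G.interedges C A) + #(G.interedges C B) := by
  rw [← card_union_of_disjoint (G.interedges_disjoint_right C hAB)]
  congr 1
  ext ⟨v, w⟩
  simp only [mk_mem_interedges_iff, mem_union]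
  tauto

theorem card_interedges_union_self (hAB : Disjoint A B) :
    #(G.interedges (A ∪ B) (A ∪ B)) =
      #(G.interedges A A) + 2 * #(G.interedges A B) + #(G.interedges B B) := by
  have : Std.Symm G.Adj := ⟨fun _ _ h => h.symm⟩
  have hcomm : #(G.interedges B A) = #(G.interedges A B) := Rel.card_interedges_comm B A
  rw [card_interedges_union_left G hAB, card_interedges_union_right G _ hAB,
    card_interedges_union_right G _ hAB, hcomm]
  ring

variable [Fintype V]

theorem sum_degree_add_card_mul_card_le (A : Finset V) :
    ∑ v ∈ A, G.degree v + #A * #A ≤ #(G.interedges A A) + #A * Fintype.card V := by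
  have hsplit : G.interedges A univ = G.interedges A A ∪ G.interedges A Aᶜ := by
    ext ⟨v, w⟩
    simp only [mk_mem_interedges_iff, mem_univ, mem_union, mem_compl]
    tauto
  have hdeg : ∑ v ∈ A, G.degree v = #(G.interedges A univ) := by
    rw [interedges_def, card_filter, sum_product]
    refine sum_congr rfl fun v _ => ?_
    rw [← card_filter, ← neighborFinset_eq_filter, card_neighborFinset_eq_degree]
  calc ∑ v ∈ A, G.degree v + #A * #A
      = #(G.interedges A A) + #(G.interedges A Aᶜ) + #A * #A := by
        rw [hdeg, hsplit,
          card_union_of_disjoint (G.interedges_disjoint_right A disjoint_compl_right)]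
    _ ≤ #(G.interedges A A) + #A * #Aᶜ + #A * #A := by
        gcongr; exact G.card_interedges_le_mul A Aᶜ
    _ = #(G.interedges A A) + #A * Fintype.card V := by
        rw [← card_add_card_compl A]; ring

theorem card_sq_le_card_interedges_add_of_le_degree {d : ℝ} (hd : ∀ v, d ≤ G.degree v)
    (A : Finset V) :
    (#A : ℝ) ^ 2 ≤ #(G.interedges A A) + (Fintype.card V - d) * #A := by
  have hsum : d * #A ≤ ∑ v ∈ A, (G.degree v : ℝ) := by
    simpa [mul_comm] using card_nsmul_le_sum A (fun v => (G.degree v : ℝ)) d fun v _ => hd v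
  have hcount : (∑ v ∈ A, (G.degree v : ℝ)) + #A * #A ≤
      #(G.interedges A A) + #A * Fintype.card V := by
    exact_mod_cast G.sum_degree_add_card_mul_card_le A
  nlinarith

end SimpleGraph

theorem sum_card_eq_card_of_pairwise_disjoint_of_cover {ι α : Type*} [Fintype ι] [Fintype α]
    [DecidableEq α] {P : ι → Finset α} (hdisj : ∀ i j, i ≠ j → Disjoint (P i) (P j))
    (hcover : ∀ v, ∃ i, v ∈ P i) :
    ∑ i, #(P i) = Fintype.card α := by
  rw [← card_biUnion fun i _ j _ hij => hdisj i j hij, ← card_univ]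
  exact congrArg card (eq_univ_iff_forall.2 fun v => by simpa using hcover v)

theorem sum_sq_sub_add_slack_le {ι : Type*} [Fintype ι] {c I : ι → ℝ} {n ε q : ℝ}
    (hq : Fintype.card ι * q = 1) (hc : ∑ l, c l = n) (hI : ∑ l, I l ≤ ε * n ^ 2)
    (hslack : ∀ l, c l ^ 2 ≤ I l + (q + ε) * n * c l) (S : Finset ι) :
    ∑ l ∈ S, ((c l - q * n) ^ 2 + (I l + (q + ε) * n * c l - c l ^ 2)) ≤ 2 * ε * n ^ 2 := by
  have htotal : ∑ l, ((c l - q * n) ^ 2 + (I l + (q + ε) * n * c l - c l ^ 2)) =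
      ∑ l, I l + ε * n ^ 2 := by
    have hexpand : ∀ l, (c l - q * n) ^ 2 + (I l + (q + ε) * n * c l - c l ^ 2) =
        I l + (ε - q) * n * c l + q ^ 2 * n ^ 2 := fun l => by ring
    simp only [hexpand, sum_add_distrib, ← sum_mul, ← mul_sum, hc, sum_const, card_univ,
      nsmul_eq_mul]
    linear_combination q * n ^ 2 * hq
  calc _ ≤ ∑ l, ((c l - q * n) ^ 2 + (I l + (q + ε) * n * c l - c l ^ 2)) :=
        sum_le_sum_of_subset_of_nonneg (subset_univ S) fun l _ _ =>
          add_nonneg (sq_nonneg _) (by linarith [hslack l])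
    _ ≤ 2 * ε * n ^ 2 := by linarith

theorem two_mul_le_mul_add_sq_sub_add_sq_sub {a b m δ c : ℝ} (hδ0 : 0 ≤ δ) (hδ1 : δ ≤ 1)
    (h : (1 + δ) * c ≤ δ * m ^ 2) :
    2 * c ≤ 2 * δ * a * b + (a - m) ^ 2 + (b - m) ^ 2 := by
  have hsos : (1 + δ) * (2 * δ * a * b + (a - m) ^ 2 + (b - m) ^ 2 - 2 * c) =
      (1 + δ) * (1 - δ) * (a - b) ^ 2 / 2 + ((1 + δ) * (a + b - 2 * m) + 2 * δ * m) ^ 2 / 2 +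
        2 * (δ * m ^ 2 - (1 + δ) * c) := by ring
  have hnonneg : 0 ≤ (1 + δ) * (2 * δ * a * b + (a - m) ^ 2 + (b - m) ^ 2 - 2 * c) := by
    rw [hsos]
    have : 0 ≤ (1 + δ) * (1 - δ) := mul_nonneg (by linarith) (by linarith)
    positivity
  nlinarith

theorem sub_sqrt_mul_le_and_le_add_sqrt_mul {x m t n : ℝ} (ht : 0 ≤ t) (hn : 0 ≤ n)
    (h : (x - m) ^ 2 ≤ t * n ^ 2) : m - √t * n ≤ x ∧ x ≤ m + √t * n := by
  have hsq : (x - m) ^ 2 ≤ (√t * n) ^ 2 := by rwa [mul_pow, Real.sq_sqrt ht]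
  obtain ⟨hlow, hhigh⟩ := abs_le_of_sq_le_sq' hsq (by positivity)
  constructor <;> linarith

theorem sq_mul_le_one_and_one_add_mul_le_of_sqrt_two_mul_le {k ε : ℝ} (hk : 2 ≤ k)
    (hε : 0 < ε) (hεk : √(2 * ε) ≤ 1 / (k - 1) - 1 / k) :
    k ^ 2 * ε ≤ 1 ∧
      ∀ n : ℝ, (1 + k ^ 2 * ε) * (ε * n ^ 2) ≤ k ^ 2 * ε * (1 / (k - 1) * n) ^ 2 := by
  have hk1 : 1 ≤ k - 1 := by linarith
  have hgap : 1 / (k - 1) - 1 / k = 1 / (k * (k - 1)) := by field_simp; ring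
  have hsq : 2 * ε * (k * (k - 1)) ^ 2 ≤ 1 := by
    have h := pow_le_pow_left₀ (Real.sqrt_nonneg _) (hεk.trans_eq hgap) 2
    rw [Real.sq_sqrt (by positivity), div_pow, one_pow, le_div_iff₀ (by positivity)] at h
    exact h
  have hδ : k ^ 2 * ε * (k - 1) ^ 2 ≤ 1 / 2 := by nlinarith
  have hδ1 : k ^ 2 * ε ≤ 1 / 2 := by
    have : 0 ≤ k ^ 2 * ε * ((k - 1) ^ 2 - 1) := mul_nonneg (by positivity) (by nlinarith)
    linarith
  refine ⟨by linarith, fun n => ?_⟩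
  have hfactor : (1 + k ^ 2 * ε) * (k - 1) ^ 2 ≤ k ^ 2 := by nlinarith
  have hε' : 0 ≤ ε * (1 / (k - 1) * n) ^ 2 := by positivity
  calc (1 + k ^ 2 * ε) * (ε * n ^ 2)
      = (1 + k ^ 2 * ε) * (k - 1) ^ 2 * (ε * (1 / (k - 1) * n) ^ 2) := by
        field_simp
    _ ≤ k ^ 2 * (ε * (1 / (k - 1) * n) ^ 2) := by gcongr
    _ = k ^ 2 * ε * (1 / (k - 1) * n) ^ 2 := by ring

theorem statement12 (k : ℕ) (hk : 2 ≤ k) (ε : ℝ) (hε : 0 < ε)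
    (hεk : Real.sqrt (2 * ε) ≤ 1 / ((k : ℝ) - 1) - 1 / (k : ℝ))
    (n : ℕ) (G : SimpleGraph (Fin n)) [DecidableRel G.Adj]
    (hmin : ∀ v : Fin n, (1 - 1 / ((k : ℝ) - 1) - ε) * n ≤ (G.degree v : ℝ))
    (P : Fin (k - 1) → Finset (Fin n))
    (hdisj : ∀ i j : Fin (k - 1), i ≠ j → Disjoint (P i) (P j))
    (hcover : ∀ v : Fin n, ∃ i, v ∈ P i)
    (hint : ((∑ i : Fin (k - 1),
        Set.ncard {e ∈ G.edgeSet | ∀ v ∈ e, v ∈ P i} : ℕ) : ℝ) ≤ ε * n ^ 2 / 2) :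
    (∀ i : Fin (k - 1),
      (n : ℝ) / ((k : ℝ) - 1) - Real.sqrt (2 * ε) * n ≤ ((P i).card : ℝ) ∧
      ((P i).card : ℝ) ≤ (n : ℝ) / ((k : ℝ) - 1) + Real.sqrt (2 * ε) * n) ∧
    ∀ i j : Fin (k - 1), i ≠ j →
      (1 - (k : ℝ) ^ 2 * ε) * ((P i).card : ℝ) * ((P j).card : ℝ) ≤
        (Set.ncard {e ∈ G.edgeSet | ∃ a ∈ P i, ∃ b ∈ P j, e = s(a, b)} : ℝ) := by
  have hk2 : (2 : ℝ) ≤ k := by exact_mod_cast hk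
  have hq : (Fintype.card (Fin (k - 1)) : ℝ) * (1 / ((k : ℝ) - 1)) = 1 := by
    rw [Fintype.card_fin, Nat.cast_sub (by omega), Nat.cast_one]
    field_simp [show (k : ℝ) - 1 ≠ 0 by linarith]
  have hsizes : ∑ l, ((P l).card : ℝ) = n := by
    exact_mod_cast (sum_card_eq_card_of_pairwise_disjoint_of_cover hdisj hcover).trans
      (Fintype.card_fin n)
  have hinside : ∑ l, (#(G.interedges (P l) (P l)) : ℝ) ≤ ε * n ^ 2 := by
    simp only [← G.two_mul_ncard_edges_within_eq_card_interedges, Nat.cast_mul, Nat.cast_ofNat,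
      ← mul_sum]
    push_cast at hint
    linarith
  have hslack : ∀ A, (#A : ℝ) ^ 2 ≤
      #(G.interedges A A) + (1 / ((k : ℝ) - 1) + ε) * n * #A := by
    intro A
    have h := G.card_sq_le_card_interedges_add_of_le_degree hmin A
    rw [Fintype.card_fin] at h
    linear_combination h
  have hdev := sum_sq_sub_add_slack_le hq hsizes hinside fun l => hslack (P l)
  obtain ⟨hδ, hgap⟩ := sq_mul_le_one_and_one_add_mul_le_of_sqrt_two_mul_le hk2 hε hεk
  refine ⟨fun i => ?_, fun i j hij => ?_⟩
  · have hi := hdev {i}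
    rw [sum_singleton] at hi
    rw [← one_div_mul_eq_div]
    exact sub_sqrt_mul_le_and_le_add_sqrt_mul (by positivity) (by positivity)
      (by linarith [hslack (P i)])
  · have hpair := hdev {i, j}
    rw [sum_pair hij] at hpair
    have hunion := hslack (P i ∪ P j)
    rw [card_union_of_disjoint (hdisj i j hij), G.card_interedges_union_self (hdisj i j hij)]
      at hunion
    push_cast at hunion
    have hkey := two_mul_le_mul_add_sq_sub_add_sq_sub (a := ((P i).card : ℝ)) (b := (P j).card)
      (by positivity) hδ (hgap n)
    rw [G.ncard_edges_between_eq_card_interedges (hdisj i j hij)]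
    linarith
end
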